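/- arXiv:math/0701707 — 2 statements merged into one kernel-verified Lean document; each statement's English description precedes it below -/
import Mathlib

section
/- If L is a simple Moufang loop, then the 3-net N associated with L is simple, i.e., the group with triality (M_0, S) determined by N (M_0 the direction preserving part of the group generated by all Bol reflections of N, S generated by the Bol reflections with axes through the origin) is S-simple. -/
open Matrix
/-- A loop: a quasigroup with two-sided neutral element. -/
class Loop (Q : Type*) extends Mul Q, One Q where
  one_mul : ∀ a : Q, 1 * a = a
  mul_one : ∀ a : Q, a * 1 = a
  mul_left_bijective : ∀ a : Q, Function.Bijective (fun x : Q => a * x)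
  mul_right_bijective : ∀ a : Q, Function.Bijective (fun x : Q => x * a)

namespace Loop

variable {Q : Type*} [Loop Q]

/-- The left translation `L_a : x ↦ a * x` of a loop. -/
noncomputable def L (a : Q) : Equiv.Perm Q :=
  Equiv.ofBijective _ (Loop.mul_left_bijective a)

/-- The right translation `R_a : x ↦ x * a` of a loop. -/
noncomputable def R (a : Q) : Equiv.Perm Q :=
  Equiv.ofBijective _ (Loop.mul_right_bijective a)

@[simp] theorem L_apply (a x : Q) : L a x = a * x := rfl
@[simp] theorem R_apply (a x : Q) : R a x = x * a := rfl

/-- The multiplication group of a loop: the permutation group generated by all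
left and right translations. -/
noncomputable def Mlt (Q : Type*) [Loop Q] : Subgroup (Equiv.Perm Q) :=
  Subgroup.closure (Set.range (L : Q → Equiv.Perm Q) ∪ Set.range (R : Q → Equiv.Perm Q))

/-- The inner mapping group of a loop: the elements of the multiplication group
fixing the neutral element. -/
noncomputable def Inn (Q : Type*) [Loop Q] : Subgroup (Equiv.Perm Q) where
  carrier := {f | f ∈ Mlt Q ∧ f 1 = 1}
  one_mem' := ⟨one_mem _, rfl⟩
  mul_mem' := fun ha hb => ⟨mul_mem ha.1 hb.1, by
    simp only [Equiv.Perm.mul_apply, hb.2, ha.2]⟩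
  inv_mem' := fun ha => ⟨inv_mem ha.1, by
    conv_lhs => rw [← ha.2]
    simp⟩

/-- A subloop: a subset containing the neutral element, closed under
multiplication and under both divisions. -/
structure IsSubloop (Q : Type*) [Loop Q] (S : Set Q) : Prop where
  one_mem : (1 : Q) ∈ S
  mul_mem : ∀ x ∈ S, ∀ y ∈ S, x * y ∈ S
  ldiv_mem : ∀ x ∈ S, ∀ y ∈ S, ∀ z, x * z = y → z ∈ S
  rdiv_mem : ∀ x ∈ S, ∀ y ∈ S, ∀ z, z * x = y → z ∈ S

/-- A normal subloop: a subloop invariant under the inner mapping group. -/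
def IsNormalSubloop (Q : Type*) [Loop Q] (S : Set Q) : Prop :=
  IsSubloop Q S ∧ ∀ φ ∈ Inn Q, ∀ x ∈ S, φ x ∈ S

/-- A loop is simple if its only normal subloops are the trivial one and the
whole loop. -/
def IsSimpleLoop (Q : Type*) [Loop Q] : Prop :=
  ∀ S : Set Q, IsNormalSubloop Q S → S = {1} ∨ S = Set.univ

/-- The subloop generated by a subset. -/
def subloopClosure (Q : Type*) [Loop Q] (s : Set Q) : Set Q :=
  ⋂₀ {T : Set Q | IsSubloop Q T ∧ s ⊆ T}

end Loop

/-- The Moufang identity. -/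
def IsMoufang (Q : Type*) [Mul Q] : Prop :=
  ∀ x y z : Q, ((x * y) * x) * z = x * (y * (x * z))

/-! `3`-nets, collineations, Bol reflections, Moufang `3`-nets. -/

/-- A `3`-net: a point set together with three classes of lines such that distinct
lines of the same class are disjoint, two lines of different classes meet in exactly
one point, and every point lies on exactly one line of each class. -/
structure ThreeNet (P : Type*) where
  lines : Fin 3 → Set (Set P)
  disj : ∀ i, ∀ ℓ ∈ lines i, ∀ ℓ' ∈ lines i, ℓ ≠ ℓ' → ℓ ∩ ℓ' = ∅
  meet : ∀ i j, i ≠ j → ∀ ℓ ∈ lines i, ∀ ℓ' ∈ lines j, ∃! p, p ∈ ℓ ∧ p ∈ ℓ'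
  point_line : ∀ (p : P) (i), ∃! ℓ, ℓ ∈ lines i ∧ p ∈ ℓ

namespace ThreeNet

variable {P : Type*} (N : ThreeNet P)

/-- A subset of the point set is a line if it belongs to one of the three classes. -/
def IsLine (ℓ : Set P) : Prop := ∃ i, ℓ ∈ N.lines i

/-- A collineation: a line preserving bijection of the point set. -/
def IsColl (f : Equiv.Perm P) : Prop :=
  (∀ ℓ, N.IsLine ℓ → N.IsLine (f '' ℓ)) ∧ (∀ ℓ, N.IsLine ℓ → N.IsLine (⇑f⁻¹ '' ℓ))

/-- The group of direction preserving collineations: collineations mapping every line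
class to itself. -/
def dirPres : Subgroup (Equiv.Perm P) where
  carrier := {f | ∀ i, ∀ ℓ ∈ N.lines i, f '' ℓ ∈ N.lines i ∧ ⇑f⁻¹ '' ℓ ∈ N.lines i}
  one_mem' := by
    intro i ℓ hℓ
    refine ⟨?_, ?_⟩ <;> simpa using hℓ
  mul_mem' := by
    intro f g hf hg i ℓ hℓ
    constructor
    · have : ⇑(f * g) '' ℓ = f '' (g '' ℓ) := by
        rw [← Set.image_comp]; rfl
      rw [this]
      exact (hf i _ ((hg i ℓ hℓ).1)).1
    · have : ⇑(f * g)⁻¹ '' ℓ = ⇑g⁻¹ '' (⇑f⁻¹ '' ℓ) := by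
        rw [← Set.image_comp]
        rfl
      rw [this]
      exact (hg i _ ((hf i ℓ hℓ).2)).2
  inv_mem' := by
    intro f hf i ℓ hℓ
    refine ⟨(hf i ℓ hℓ).2, ?_⟩
    have : ⇑f⁻¹⁻¹ '' ℓ = f '' ℓ := by rw [inv_inv]
    rw [this]
    exact (hf i ℓ hℓ).1

/-- The geometric specification of the (would-be) Bol reflection `σ_ℓ` with axis `ℓ`
of class `i`: for every point `p`, with `a_j, a_k` the lines through `p` of the other
two classes, meeting the axis in `q_j` resp. `q_k`, the image of `p` is the
intersection of the `j`-line through `q_k` with the `k`-line through `q_j`. -/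
def BolSpec (i : Fin 3) (ℓ : Set P) (f : P → P) : Prop :=
  ∀ j k : Fin 3, j ≠ i → k ≠ i → j ≠ k →
    ∀ p : P, ∀ aj ∈ N.lines j, ∀ ak ∈ N.lines k, p ∈ aj → p ∈ ak →
      ∀ qj, qj ∈ aj → qj ∈ ℓ → ∀ qk, qk ∈ ak → qk ∈ ℓ →
        ∀ bj ∈ N.lines j, ∀ bk ∈ N.lines k, qk ∈ bj → qj ∈ bk →
          f p ∈ bj ∧ f p ∈ bk

/-- `f` is the Bol reflection with axis `ℓ`: it satisfies the geometric specification
of `σ_ℓ` and is a collineation. -/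
def IsBolRefl (ℓ : Set P) (f : Equiv.Perm P) : Prop :=
  (∃ i, ℓ ∈ N.lines i ∧ N.BolSpec i ℓ f) ∧ N.IsColl f

/-- A `3`-net is Moufang if the map `σ_ℓ` is a (Bol reflection) collineation for every
line `ℓ`. -/
def IsMoufangNet : Prop :=
  ∀ i, ∀ ℓ ∈ N.lines i, ∃ f : Equiv.Perm P, N.BolSpec i ℓ f ∧ N.IsColl f

/-- The group `M` generated by all Bol reflections of the net. -/
def MGroup : Subgroup (Equiv.Perm P) :=
  Subgroup.closure {f | ∃ ℓ, N.IsBolRefl ℓ f}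

/-- The direction preserving part `M₀` of the group generated by all Bol
reflections. -/
def MZero : Subgroup (Equiv.Perm P) := N.MGroup ⊓ N.dirPres

/-- The coordinate loop multiplication of a `3`-net, relationally: given the
"horizontal" coordinate line `ℓ₁` (of class `0`) and the "vertical" line `ℓ₂`
(of class `1`) through the origin, `CoordMul ℓ₁ ℓ₂ x y z` says that the product of the
points `x` and `y` of `ℓ₁` in the coordinate loop is the point `z` of `ℓ₁`. -/
def CoordMul (ℓ₁ ℓ₂ : Set P) (x y z : P) : Prop :=
  ∃ t₁ ∈ N.lines 2, y ∈ t₁ ∧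
    ∃ p, p ∈ t₁ ∧ p ∈ ℓ₂ ∧
      ∃ m ∈ N.lines 0, p ∈ m ∧
        ∃ v ∈ N.lines 1, x ∈ v ∧
          ∃ q, q ∈ m ∧ q ∈ v ∧
            ∃ t₂ ∈ N.lines 2, q ∈ t₂ ∧ z ∈ t₂ ∧ z ∈ ℓ₁

end ThreeNet

/-! The `3`-net associated with a loop. -/

namespace Loop

variable {Q : Type*} [Loop Q]

theorem mul_left_cancel' {a x y : Q} (h : a * x = a * y) : x = y :=
  (Loop.mul_left_bijective a).1 h

theorem mul_right_cancel' {a x y : Q} (h : x * a = y * a) : x = y :=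
  (Loop.mul_right_bijective a).1 h

theorem existsUnique_ldiv (a b : Q) : ∃! x, a * x = b := by
  obtain ⟨x, hx⟩ := (Loop.mul_left_bijective a).2 b
  exact ⟨x, hx, fun y hy => mul_left_cancel' (hy.trans hx.symm)⟩

theorem existsUnique_rdiv (a b : Q) : ∃! x, x * a = b := by
  obtain ⟨x, hx⟩ := (Loop.mul_right_bijective a).2 b
  exact ⟨x, hx, fun y hy => mul_right_cancel' (hy.trans hx.symm)⟩

/-- A horizontal line of the `3`-net associated with a loop. -/
def hline (c : Q) : Set (Q × Q) := {p | p.2 = c}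
/-- A vertical line of the `3`-net associated with a loop. -/
def vline (c : Q) : Set (Q × Q) := {p | p.1 = c}
/-- A transversal line of the `3`-net associated with a loop. -/
def tline (c : Q) : Set (Q × Q) := {p | p.1 * p.2 = c}

theorem hline_inj {c c' : Q} (h : hline c = hline c') : c = c' := by
  have : (1, c) ∈ hline c := rfl
  rw [h] at this
  exact this

theorem vline_inj {c c' : Q} (h : vline c = vline c') : c = c' := by
  have : (c, 1) ∈ vline c := rfl
  rw [h] at this
  exact this

theorem tline_inj {c c' : Q} (h : tline c = tline c') : c = c' := by
  have : (c, 1) ∈ tline c := Loop.mul_one c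
  rw [h] at this
  exact (Loop.mul_one c).symm.trans this

/-- The `3`-net associated with a loop: points are pairs `(x, y) ∈ Q × Q`, with
horizontal lines `{(x, c)}`, vertical lines `{(c, y)}` and transversal lines
`{(x, y) | x·y = c}`. -/
def loopNet (Q : Type*) [Loop Q] : ThreeNet (Q × Q) where
  lines := ![{s | ∃ c : Q, s = hline c}, {s | ∃ c : Q, s = vline c},
    {s | ∃ c : Q, s = tline c}]
  disj := by
    intro i
    fin_cases i <;>
      · rintro ℓ ⟨c, rfl⟩ ℓ' ⟨c', rfl⟩ hne
        ext p
        simp only [Set.mem_inter_iff, Set.mem_empty_iff_false, iff_false, not_and]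
        intro h1 h2
        exact hne (by rw [show c = c' from (h1 : _ = c).symm.trans h2])
  meet := by
    have h01 : ∀ c d : Q, ∃! p : Q × Q, p ∈ hline c ∧ p ∈ vline d := by
      intro c d
      refine ⟨(d, c), ⟨rfl, rfl⟩, ?_⟩
      rintro ⟨x, y⟩ ⟨h1, h2⟩
      simp only [hline, vline, Set.mem_setOf_eq] at h1 h2
      rw [h1, h2]
    have h02 : ∀ c d : Q, ∃! p : Q × Q, p ∈ hline c ∧ p ∈ tline d := by
      intro c d
      obtain ⟨x, hx, hxu⟩ := existsUnique_rdiv c d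
      refine ⟨(x, c), ⟨rfl, hx⟩, ?_⟩
      rintro ⟨u, v⟩ ⟨h1, h2⟩
      simp only [hline, tline, Set.mem_setOf_eq] at h1 h2
      subst h1
      rw [hxu u h2]
    have h12 : ∀ c d : Q, ∃! p : Q × Q, p ∈ vline c ∧ p ∈ tline d := by
      intro c d
      obtain ⟨y, hy, hyu⟩ := existsUnique_ldiv c d
      refine ⟨(c, y), ⟨rfl, hy⟩, ?_⟩
      rintro ⟨u, v⟩ ⟨h1, h2⟩
      simp only [vline, tline, Set.mem_setOf_eq] at h1 h2
      subst h1
      rw [hyu v h2]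
    have symm : ∀ (A B : Set (Q × Q)), (∃! p : Q × Q, p ∈ A ∧ p ∈ B) →
        ∃! p : Q × Q, p ∈ B ∧ p ∈ A := by
      rintro A B ⟨p, ⟨h1, h2⟩, hu⟩
      exact ⟨p, ⟨h2, h1⟩, fun q ⟨g2, g1⟩ => hu q ⟨g1, g2⟩⟩
    intro i j hij
    fin_cases i <;> fin_cases j
    · exact absurd rfl hij
    · rintro ℓ ⟨c, rfl⟩ ℓ' ⟨c', rfl⟩; exact h01 c c'
    · rintro ℓ ⟨c, rfl⟩ ℓ' ⟨c', rfl⟩; exact h02 c c'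
    · rintro ℓ ⟨c, rfl⟩ ℓ' ⟨c', rfl⟩; exact symm _ _ (h01 c' c)
    · exact absurd rfl hij
    · rintro ℓ ⟨c, rfl⟩ ℓ' ⟨c', rfl⟩; exact h12 c c'
    · rintro ℓ ⟨c, rfl⟩ ℓ' ⟨c', rfl⟩; exact symm _ _ (h02 c' c)
    · rintro ℓ ⟨c, rfl⟩ ℓ' ⟨c', rfl⟩; exact symm _ _ (h12 c' c)
    · exact absurd rfl hij
  point_line := by
    rintro ⟨x, y⟩ i
    fin_cases i
    · refine ⟨hline y, ⟨⟨y, rfl⟩, rfl⟩, ?_⟩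
      rintro ℓ ⟨⟨c, rfl⟩, hc⟩
      rw [show c = y from (hc : _ = c).symm]
    · refine ⟨vline x, ⟨⟨x, rfl⟩, rfl⟩, ?_⟩
      rintro ℓ ⟨⟨c, rfl⟩, hc⟩
      rw [show c = x from (hc : _ = c).symm]
    · refine ⟨tline (x * y), ⟨⟨x * y, rfl⟩, rfl⟩, ?_⟩
      rintro ℓ ⟨⟨c, rfl⟩, hc⟩
      rw [show c = x * y from (hc : _ = c).symm]

/-- The lines of `loopNet Q` through the origin `(1, 1)`. -/
def originLine (Q : Type*) [Loop Q] : Fin 3 → Set (Q × Q) :=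
  ![hline 1, vline 1, tline 1]

end Loop
namespace MoufangProof
open Loop

variable {Q : Type*} [Loop Q]

noncomputable instance : Inv Q := ⟨fun a => (existsUnique_rdiv a 1).exists.choose⟩

theorem inv_mul (a : Q) : a⁻¹ * a = 1 := (existsUnique_rdiv a (1:Q)).exists.choose_spec

theorem flexi (hM : IsMoufang Q) (x y : Q) : (x * y) * x = x * (y * x) := by
  have h := hM x y 1
  rwa [Loop.mul_one, Loop.mul_one] at h

theorem lip1 (hM : IsMoufang Q) (a z : Q) : a * (a⁻¹ * z) = z := by
  have h := hM a⁻¹ a z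
  rw [inv_mul, Loop.one_mul] at h
  exact (mul_left_cancel' h).symm

theorem mul_inv (hM : IsMoufang Q) (a : Q) : a * a⁻¹ = 1 := by
  have := lip1 hM a 1
  rwa [Loop.mul_one] at this

theorem inv_inv (hM : IsMoufang Q) (a : Q) : a⁻¹⁻¹ = a :=
  mul_right_cancel' ((inv_mul a⁻¹).trans (mul_inv hM a).symm)

theorem lip2 (hM : IsMoufang Q) (a z : Q) : a⁻¹ * (a * z) = z := by
  have := lip1 hM a⁻¹ z
  rwa [inv_inv hM] at this

@[simp] theorem inv_one' : (1 : Q)⁻¹ = 1 := by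
  have := inv_mul (1 : Q)
  rwa [Loop.mul_one] at this

theorem eq_inv_of_mul_eq_one (h : x * a = (1 : Q)) : x = a⁻¹ :=
  mul_right_cancel' (h.trans (inv_mul a).symm)

theorem eq_inv_of_mul_eq_one' (hM : IsMoufang Q) (h : a * x = (1 : Q)) : x = a⁻¹ :=
  mul_left_cancel' (h.trans (mul_inv hM a).symm)

theorem rip1 (hM : IsMoufang Q) (v x : Q) : (v * x⁻¹) * x = v := by
  obtain ⟨w, hw⟩ := (Loop.mul_right_bijective x).2 v
  obtain ⟨y, hy⟩ := (Loop.mul_left_bijective x).2 w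
  simp only at hw hy
  have h := hM x y x⁻¹
  rw [mul_inv hM, Loop.mul_one] at h
  have hv : v = (x * y) * x := by rw [hy, hw]
  rw [hv, h]

theorem rip2 (hM : IsMoufang Q) (v x : Q) : (v * x) * x⁻¹ = v := by
  have := rip1 hM v x⁻¹
  rwa [inv_inv hM] at this

theorem minv_rev (hM : IsMoufang Q) (a b : Q) : (a * b)⁻¹ = b⁻¹ * a⁻¹ := by
  have h1 : b * (b⁻¹ * a⁻¹) = a⁻¹ := lip1 hM b a⁻¹
  have h2 : a⁻¹ * (b⁻¹ * a⁻¹)⁻¹ = b := by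
    have := rip2 hM b (b⁻¹ * a⁻¹)
    rwa [h1] at this
  have h3 : a * b = (b⁻¹ * a⁻¹)⁻¹ := by
    have := lip1 hM a (b⁻¹ * a⁻¹)⁻¹
    rw [h2] at this
    exact this
  rw [h3, inv_inv hM]

theorem rmuf (hM : IsMoufang Q) (z x y : Q) : ((z * x) * y) * x = z * (x * (y * x)) := by
  have h := congrArg (fun t => t⁻¹) (hM x⁻¹ y⁻¹ z⁻¹)
  simp only [minv_rev hM, inv_inv hM] at h
  exact h.symm

/-- master identity of `R`-type: `(u c⁻¹)(c (v c)) = (u v) c`. -/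
theorem rstar (hM : IsMoufang Q) (u c v : Q) :
    (u * c⁻¹) * (c * (v * c)) = (u * v) * c := by
  have h := rmuf hM (u * c⁻¹) c v
  rw [rip1 hM u c] at h
  exact h.symm

/-- master identity of `L`-type: `(c (a c))(c⁻¹ w) = c (a w)`. -/
theorem lstar (hM : IsMoufang Q) (c a w : Q) :
    (c * (a * c)) * (c⁻¹ * w) = c * (a * w) := by
  have h := hM c a (c⁻¹ * w)
  rw [lip1 hM c w, flexi hM c a] at h
  exact h

theorem midmuf (hM : IsMoufang Q) (x u v : Q) :
    (x * (u * v)) * x = (x * u) * (v * x) := by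
  have hA : x * (u * v) = ((x * u) * x) * (x⁻¹ * v) := by
    have h := hM x u (x⁻¹ * v)
    rw [lip1 hM x v] at h
    exact h.symm
  have hB : (((x * u) * x) * (x⁻¹ * v)) * x
      = (((x * u) * x) * x⁻¹) * (x * ((x⁻¹ * v) * x)) := by
    have h := rmuf hM (((x * u) * x) * x⁻¹) x (x⁻¹ * v)
    rw [rip1 hM ((x * u) * x) x] at h
    exact h
  have hC : x * ((x⁻¹ * v) * x) = v * x := by
    have h := hM x (x⁻¹ * v) 1
    rw [Loop.mul_one, Loop.mul_one, lip1 hM x v] at h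
    exact h.symm
  rw [hA, hB, rip2 hM (x * u) x, hC]

end MoufangProof
namespace MoufangProof
open Loop

variable {Q : Type*} [Loop Q]

theorem Hc_prod (hM : IsMoufang Q) (c x y : Q) :
    ((x * y) * c⁻¹) * (c * (y⁻¹ * c)) = x * c := by
  have h := rstar hM (x * y) c y⁻¹
  rwa [rip2 hM x y] at h

theorem Vc_prod (hM : IsMoufang Q) (c x y : Q) :
    (c * (x⁻¹ * c)) * (c⁻¹ * (x * y)) = c * y := by
  have h := lstar hM c x⁻¹ (x * y)
  rwa [lip2 hM x y] at h

theorem Tc_prod (hM : IsMoufang Q) (c x y : Q) :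
    (c * y⁻¹) * (x⁻¹ * c) = (c * (x * y)⁻¹) * c := by
  have h := midmuf hM c y⁻¹ x⁻¹
  rw [← minv_rev hM x y] at h
  exact h.symm

theorem inv_cyc1 (hM : IsMoufang Q) (c y : Q) : (c * (y⁻¹ * c))⁻¹ = (c⁻¹ * y) * c⁻¹ := by
  rw [minv_rev hM, minv_rev hM, inv_inv hM]

theorem inv_cyc2 (hM : IsMoufang Q) (c y : Q) : ((c⁻¹ * y) * c⁻¹)⁻¹ = c * (y⁻¹ * c) := by
  rw [← inv_cyc1 hM, inv_inv hM]

/-- The Bol reflection with axis `hline c`. -/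
noncomputable def HcE (hM : IsMoufang Q) (c : Q) : Equiv.Perm (Q × Q) :=
  Function.Involutive.toPerm (fun p => ((p.1 * p.2) * c⁻¹, c * (p.2⁻¹ * c))) (by
    rintro ⟨x, y⟩
    simp only
    rw [Hc_prod hM c x y, rip2 hM x c, inv_cyc1 hM c y, rip1 hM (c⁻¹ * y) c, lip1 hM c y])

@[simp] theorem HcE_apply (hM : IsMoufang Q) (c : Q) (p : Q × Q) :
    HcE hM c p = ((p.1 * p.2) * c⁻¹, c * (p.2⁻¹ * c)) := rfl

theorem HcE_inv (hM : IsMoufang Q) (c : Q) : (HcE hM c)⁻¹ = HcE hM c :=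
  Function.Involutive.toPerm_symm _

/-- The Bol reflection with axis `vline c`. -/
noncomputable def VcE (hM : IsMoufang Q) (c : Q) : Equiv.Perm (Q × Q) :=
  Function.Involutive.toPerm (fun p => (c * (p.1⁻¹ * c), c⁻¹ * (p.1 * p.2))) (by
    rintro ⟨x, y⟩
    simp only
    rw [Vc_prod hM c x y, lip2 hM c y, inv_cyc1 hM c x, rip1 hM (c⁻¹ * x) c, lip1 hM c x])

@[simp] theorem VcE_apply (hM : IsMoufang Q) (c : Q) (p : Q × Q) :
    VcE hM c p = (c * (p.1⁻¹ * c), c⁻¹ * (p.1 * p.2)) := rfl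

theorem VcE_inv (hM : IsMoufang Q) (c : Q) : (VcE hM c)⁻¹ = VcE hM c :=
  Function.Involutive.toPerm_symm _

/-- The Bol reflection with axis `tline c`. -/
noncomputable def TcE (hM : IsMoufang Q) (c : Q) : Equiv.Perm (Q × Q) :=
  Function.Involutive.toPerm (fun p => (c * p.2⁻¹, p.1⁻¹ * c)) (by
    rintro ⟨x, y⟩
    simp only
    rw [minv_rev hM x⁻¹ c, inv_inv hM, minv_rev hM c y⁻¹, inv_inv hM,
      lip1 hM c x, rip1 hM y c])

@[simp] theorem TcE_apply (hM : IsMoufang Q) (c : Q) (p : Q × Q) :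
    TcE hM c p = (c * p.2⁻¹, p.1⁻¹ * c) := rfl

theorem TcE_inv (hM : IsMoufang Q) (c : Q) : (TcE hM c)⁻¹ = TcE hM c :=
  Function.Involutive.toPerm_symm _

/-- The translation-type collineation `η_c = σ_{h,1} σ_{h,c}`. -/
noncomputable def etaE (hM : IsMoufang Q) (c : Q) : Equiv.Perm (Q × Q) where
  toFun p := (p.1 * c, (c⁻¹ * p.2) * c⁻¹)
  invFun q := (q.1 * c⁻¹, c * (q.2 * c))
  left_inv := by
    rintro ⟨x, y⟩
    simp only
    rw [rip2 hM x c, rip1 hM (c⁻¹ * y) c, lip1 hM c y]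
  right_inv := by
    rintro ⟨x, y⟩
    simp only
    rw [rip1 hM x c, lip2 hM c (y * c), rip2 hM y c]

@[simp] theorem etaE_apply (hM : IsMoufang Q) (c : Q) (p : Q × Q) :
    etaE hM c p = (p.1 * c, (c⁻¹ * p.2) * c⁻¹) := rfl

@[simp] theorem etaE_inv_apply (hM : IsMoufang Q) (c : Q) (p : Q × Q) :
    (etaE hM c)⁻¹ p = (p.1 * c⁻¹, c * (p.2 * c)) := rfl

/-- The translation-type collineation `η'_c = σ_{v,1} σ_{v,c}`. -/
noncomputable def etapE (hM : IsMoufang Q) (c : Q) : Equiv.Perm (Q × Q) where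
  toFun p := ((c⁻¹ * p.1) * c⁻¹, c * p.2)
  invFun q := (c * (q.1 * c), c⁻¹ * q.2)
  left_inv := by
    rintro ⟨x, y⟩
    simp only
    rw [rip1 hM (c⁻¹ * x) c, lip1 hM c x, lip2 hM c y]
  right_inv := by
    rintro ⟨x, y⟩
    simp only
    rw [lip2 hM c (x * c), rip2 hM x c, lip1 hM c y]

@[simp] theorem etapE_apply (hM : IsMoufang Q) (c : Q) (p : Q × Q) :
    etapE hM c p = ((c⁻¹ * p.1) * c⁻¹, c * p.2) := rfl

@[simp] theorem etapE_inv_apply (hM : IsMoufang Q) (c : Q) (p : Q × Q) :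
    (etapE hM c)⁻¹ p = (c * (p.1 * c), c⁻¹ * p.2) := rfl

/-- The translation-type collineation `τ_c = σ_{t,1} σ_{t,c}`. -/
noncomputable def tauE (hM : IsMoufang Q) (c : Q) : Equiv.Perm (Q × Q) where
  toFun p := (c⁻¹ * p.1, p.2 * c⁻¹)
  invFun q := (c * q.1, q.2 * c)
  left_inv := by
    rintro ⟨x, y⟩
    simp only
    rw [lip1 hM c x, rip1 hM y c]
  right_inv := by
    rintro ⟨x, y⟩
    simp only
    rw [lip2 hM c x, rip2 hM y c]

@[simp] theorem tauE_apply (hM : IsMoufang Q) (c : Q) (p : Q × Q) :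
    tauE hM c p = (c⁻¹ * p.1, p.2 * c⁻¹) := rfl

@[simp] theorem tauE_inv_apply (hM : IsMoufang Q) (c : Q) (p : Q × Q) :
    (tauE hM c)⁻¹ p = (c * p.1, p.2 * c) := rfl

theorem etaE_eq (hM : IsMoufang Q) (c : Q) : etaE hM c = HcE hM 1 * HcE hM c := by
  apply Equiv.ext
  rintro ⟨x, y⟩
  simp only [Equiv.Perm.mul_apply, HcE_apply, etaE_apply, inv_one', Loop.mul_one,
    Loop.one_mul]
  rw [Hc_prod hM c x y, inv_cyc1 hM c y]

theorem etapE_eq (hM : IsMoufang Q) (c : Q) : etapE hM c = VcE hM 1 * VcE hM c := by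
  apply Equiv.ext
  rintro ⟨x, y⟩
  simp only [Equiv.Perm.mul_apply, VcE_apply, etapE_apply, inv_one', Loop.mul_one,
    Loop.one_mul]
  rw [Vc_prod hM c x y, inv_cyc1 hM c x]

theorem tauE_eq (hM : IsMoufang Q) (c : Q) : tauE hM c = TcE hM 1 * TcE hM c := by
  apply Equiv.ext
  rintro ⟨x, y⟩
  simp only [Equiv.Perm.mul_apply, TcE_apply, tauE_apply, inv_one', Loop.mul_one,
    Loop.one_mul]
  rw [minv_rev hM x⁻¹ c, inv_inv hM, minv_rev hM c y⁻¹, inv_inv hM]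

@[simp] theorem HcE_one_apply (hM : IsMoufang Q) (p : Q × Q) :
    HcE hM 1 p = (p.1 * p.2, p.2⁻¹) := by
  simp only [HcE_apply, inv_one', Loop.mul_one, Loop.one_mul]

@[simp] theorem VcE_one_apply (hM : IsMoufang Q) (p : Q × Q) :
    VcE hM 1 p = (p.1⁻¹, p.1 * p.2) := by
  simp only [VcE_apply, inv_one', Loop.mul_one, Loop.one_mul]

@[simp] theorem TcE_one_apply (hM : IsMoufang Q) (p : Q × Q) :
    TcE hM 1 p = (p.2⁻¹, p.1⁻¹) := by
  simp only [TcE_apply, inv_one', Loop.mul_one, Loop.one_mul]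

end MoufangProof
namespace MoufangProof
open Loop

set_option linter.unusedSectionVars false

variable {Q : Type*} [Loop Q]

@[simp] theorem mem_hline {p : Q × Q} {c : Q} : p ∈ hline c ↔ p.2 = c := Iff.rfl
@[simp] theorem mem_vline {p : Q × Q} {c : Q} : p ∈ vline c ↔ p.1 = c := Iff.rfl
@[simp] theorem mem_tline {p : Q × Q} {c : Q} : p ∈ tline c ↔ p.1 * p.2 = c := Iff.rfl

theorem lines_zero : (loopNet Q).lines 0 = {s | ∃ c : Q, s = hline c} := rfl
theorem lines_one : (loopNet Q).lines 1 = {s | ∃ c : Q, s = vline c} := rfl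
theorem lines_two : (loopNet Q).lines 2 = {s | ∃ c : Q, s = tline c} := rfl

theorem img_line_eq {f : Equiv.Perm (Q × Q)} {S T : Set (Q × Q)}
    (h1 : ∀ p ∈ S, f p ∈ T) (h2 : ∀ q ∈ T, ∃ p ∈ S, f p = q) : ⇑f '' S = T := by
  ext q
  constructor
  · rintro ⟨p, hp, rfl⟩; exact h1 p hp
  · intro hq; obtain ⟨p, hp, hfp⟩ := h2 q hq; exact ⟨p, hp, hfp⟩

/-! Image lemmas for the Bol reflections. -/

theorem Hc_img_h (hM : IsMoufang Q) (c d : Q) :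
    ⇑(HcE hM c) '' hline d = hline (c * (d⁻¹ * c)) := by
  apply img_line_eq
  · rintro ⟨x, y⟩ hy
    simp only [mem_hline] at hy ⊢
    subst hy; rfl
  · rintro ⟨u, v⟩ hv
    simp only [mem_hline] at hv
    refine ⟨((u * c) * d⁻¹, d), rfl, ?_⟩
    simp only [HcE_apply]
    rw [rip1 hM (u * c) d, rip2 hM u c, hv]

theorem Hc_img_v (hM : IsMoufang Q) (c a : Q) :
    ⇑(HcE hM c) '' vline a = tline (a * c) := by
  apply img_line_eq
  · rintro ⟨x, y⟩ hx
    simp only [mem_vline] at hx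
    simp only [mem_tline, HcE_apply]
    rw [← hx]
    exact Hc_prod hM c x y
  · rintro ⟨u, v⟩ huv
    simp only [mem_tline] at huv
    refine ⟨(a, a⁻¹ * (u * c)), rfl, ?_⟩
    have h1 : a * (a⁻¹ * (u * c)) = u * c := lip1 hM a _
    have hprod := Hc_prod hM c a (a⁻¹ * (u * c))
    rw [h1, rip2 hM u c] at hprod
    have h2 : c * ((a⁻¹ * (u * c))⁻¹ * c) = v :=
      mul_left_cancel' (hprod.trans huv.symm)
    simp only [HcE_apply]
    rw [h1, rip2 hM u c, h2]

theorem Hc_img_t (hM : IsMoufang Q) (c z : Q) :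
    ⇑(HcE hM c) '' tline z = vline (z * c⁻¹) := by
  apply img_line_eq
  · rintro ⟨x, y⟩ hxy
    simp only [mem_tline] at hxy
    simp only [mem_vline, HcE_apply]
    rw [hxy]
  · rintro ⟨u, v⟩ hu
    simp only [mem_vline] at hu
    refine ⟨(z * (c * (v⁻¹ * c))⁻¹, c * (v⁻¹ * c)), ?_, ?_⟩
    · simp only [mem_tline]
      exact rip1 hM z (c * (v⁻¹ * c))
    · simp only [HcE_apply]
      rw [rip1 hM z (c * (v⁻¹ * c)), inv_cyc1 hM c v, rip1 hM (c⁻¹ * v) c, lip1 hM c v, hu]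

theorem Vc_img_h (hM : IsMoufang Q) (c d : Q) :
    ⇑(VcE hM c) '' hline d = tline (c * d) := by
  apply img_line_eq
  · rintro ⟨x, y⟩ hy
    simp only [mem_hline] at hy
    simp only [mem_tline, VcE_apply]
    rw [← hy]
    exact Vc_prod hM c x y
  · rintro ⟨u, v⟩ huv
    simp only [mem_tline] at huv
    refine ⟨(c * (u⁻¹ * c), d), rfl, ?_⟩
    have h1 : c * ((c * (u⁻¹ * c))⁻¹ * c) = u := by
      rw [inv_cyc1 hM c u, rip1 hM (c⁻¹ * u) c, lip1 hM c u]
    have hprod := Vc_prod hM c (c * (u⁻¹ * c)) d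
    rw [h1] at hprod
    have h2 : c⁻¹ * ((c * (u⁻¹ * c)) * d) = v :=
      mul_left_cancel' (hprod.trans huv.symm)
    simp only [VcE_apply]
    rw [h1, h2]

theorem Vc_img_v (hM : IsMoufang Q) (c a : Q) :
    ⇑(VcE hM c) '' vline a = vline (c * (a⁻¹ * c)) := by
  apply img_line_eq
  · rintro ⟨x, y⟩ hx
    simp only [mem_vline] at hx ⊢
    subst hx; rfl
  · rintro ⟨u, v⟩ hu
    simp only [mem_vline] at hu
    refine ⟨(a, a⁻¹ * (c * v)), rfl, ?_⟩
    simp only [VcE_apply]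
    rw [lip1 hM a (c * v), lip2 hM c v, hu]

theorem Vc_img_t (hM : IsMoufang Q) (c z : Q) :
    ⇑(VcE hM c) '' tline z = hline (c⁻¹ * z) := by
  apply img_line_eq
  · rintro ⟨x, y⟩ hxy
    simp only [mem_tline] at hxy
    simp only [mem_hline, VcE_apply]
    rw [hxy]
  · rintro ⟨u, v⟩ hv
    simp only [mem_hline] at hv
    refine ⟨(c * (u⁻¹ * c), (c * (u⁻¹ * c))⁻¹ * z), ?_, ?_⟩
    · simp only [mem_tline]
      exact lip1 hM _ z
    · simp only [VcE_apply]
      rw [lip1 hM (c * (u⁻¹ * c)) z, inv_cyc1 hM c u, rip1 hM (c⁻¹ * u) c, lip1 hM c u, hv]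

theorem Tc_img_h (hM : IsMoufang Q) (c d : Q) :
    ⇑(TcE hM c) '' hline d = vline (c * d⁻¹) := by
  apply img_line_eq
  · rintro ⟨x, y⟩ hy
    simp only [mem_hline] at hy
    subst hy; rfl
  · rintro ⟨u, v⟩ hu
    simp only [mem_vline] at hu
    refine ⟨(c * v⁻¹, d), rfl, ?_⟩
    simp only [TcE_apply]
    rw [minv_rev hM c v⁻¹, inv_inv hM, rip1 hM v c, hu]

theorem Tc_img_v (hM : IsMoufang Q) (c a : Q) :
    ⇑(TcE hM c) '' vline a = hline (a⁻¹ * c) := by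
  apply img_line_eq
  · rintro ⟨x, y⟩ hx
    simp only [mem_vline] at hx
    subst hx; rfl
  · rintro ⟨u, v⟩ hv
    simp only [mem_hline] at hv
    refine ⟨(a, u⁻¹ * c), rfl, ?_⟩
    simp only [TcE_apply]
    rw [minv_rev hM u⁻¹ c, inv_inv hM, lip1 hM c u, hv]

theorem Tc_img_t (hM : IsMoufang Q) (c z : Q) :
    ⇑(TcE hM c) '' tline z = tline ((c * z⁻¹) * c) := by
  apply img_line_eq
  · rintro ⟨x, y⟩ hxy
    simp only [mem_tline] at hxy
    simp only [mem_tline, TcE_apply]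
    rw [Tc_prod hM c x y, hxy]
  · rintro ⟨u, v⟩ huv
    simp only [mem_tline] at huv
    refine ⟨(z * (u⁻¹ * c)⁻¹, u⁻¹ * c), ?_, ?_⟩
    · simp only [mem_tline]
      exact rip1 hM z (u⁻¹ * c)
    · have hy : c * (u⁻¹ * c)⁻¹ = u := by
        rw [minv_rev hM u⁻¹ c, inv_inv hM, lip1 hM c u]
      have hx : (z * (u⁻¹ * c)⁻¹) * (u⁻¹ * c) = z := rip1 hM z _
      have hprod := Tc_prod hM c (z * (u⁻¹ * c)⁻¹) (u⁻¹ * c)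
      rw [hx, hy] at hprod
      have h2 : (z * (u⁻¹ * c)⁻¹)⁻¹ * c = v := mul_left_cancel' (hprod.trans huv.symm)
      simp only [TcE_apply]
      rw [hy, h2]

end MoufangProof
namespace MoufangProof
open Loop

set_option linter.unusedSectionVars false

variable {Q : Type*} [Loop Q]

theorem eta_prod (hM : IsMoufang Q) (c x y : Q) :
    (x * c) * ((c⁻¹ * y) * c⁻¹) = (x * y) * c⁻¹ := by
  rw [flexi hM c⁻¹ y]
  have h := rstar hM x c⁻¹ y
  rwa [inv_inv hM] at h

theorem etap_prod (hM : IsMoufang Q) (c x y : Q) :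
    ((c⁻¹ * x) * c⁻¹) * (c * y) = c⁻¹ * (x * y) := by
  rw [flexi hM c⁻¹ x]
  have h := lstar hM c⁻¹ x y
  rwa [inv_inv hM] at h

theorem tau_prod (hM : IsMoufang Q) (c x y : Q) :
    (c⁻¹ * x) * (y * c⁻¹) = (c⁻¹ * (x * y)) * c⁻¹ :=
  (midmuf hM c⁻¹ x y).symm

theorem eta_img_h (hM : IsMoufang Q) (c d : Q) :
    ⇑(etaE hM c) '' hline d = hline ((c⁻¹ * d) * c⁻¹) := by
  apply img_line_eq
  · rintro ⟨x, y⟩ hy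
    simp only [mem_hline] at hy ⊢
    rw [show ((etaE hM c) (x,y)).2 = (c⁻¹ * y) * c⁻¹ from rfl, hy]
  · rintro ⟨u, v⟩ hv
    simp only [mem_hline] at hv
    refine ⟨(u * c⁻¹, d), rfl, ?_⟩
    simp only [etaE_apply]
    rw [rip1 hM u c, hv]

theorem eta_img_v (hM : IsMoufang Q) (c a : Q) :
    ⇑(etaE hM c) '' vline a = vline (a * c) := by
  apply img_line_eq
  · rintro ⟨x, y⟩ hx
    simp only [mem_vline] at hx ⊢
    rw [show ((etaE hM c) (x,y)).1 = x * c from rfl, hx]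
  · rintro ⟨u, v⟩ hu
    simp only [mem_vline] at hu
    refine ⟨(a, c * (v * c)), rfl, ?_⟩
    simp only [etaE_apply]
    rw [lip2 hM c (v * c), rip2 hM v c, hu]

theorem eta_img_t (hM : IsMoufang Q) (c z : Q) :
    ⇑(etaE hM c) '' tline z = tline (z * c⁻¹) := by
  apply img_line_eq
  · rintro ⟨x, y⟩ hxy
    simp only [mem_tline] at hxy
    simp only [mem_tline, etaE_apply]
    rw [eta_prod hM c x y, hxy]
  · rintro ⟨u, v⟩ huv
    simp only [mem_tline] at huv
    refine ⟨(u * c⁻¹, (u * c⁻¹)⁻¹ * z), ?_, ?_⟩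
    · simp only [mem_tline]
      exact lip1 hM _ z
    · have hx : (u * c⁻¹) * c = u := rip1 hM u c
      have hprod := eta_prod hM c (u * c⁻¹) ((u * c⁻¹)⁻¹ * z)
      rw [lip1 hM (u * c⁻¹) z, hx] at hprod
      have h2 : (c⁻¹ * ((u * c⁻¹)⁻¹ * z)) * c⁻¹ = v :=
        mul_left_cancel' (hprod.trans huv.symm)
      simp only [etaE_apply]
      rw [hx, h2]

theorem etainv_img_h (hM : IsMoufang Q) (c d : Q) :
    ⇑(etaE hM c)⁻¹ '' hline d = hline (c * (d * c)) := by
  apply img_line_eq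
  · rintro ⟨x, y⟩ hy
    simp only [mem_hline] at hy ⊢
    rw [show ((etaE hM c)⁻¹ (x,y)).2 = c * (y * c) from rfl, hy]
  · rintro ⟨u, v⟩ hv
    simp only [mem_hline] at hv
    refine ⟨(u * c, d), rfl, ?_⟩
    simp only [etaE_inv_apply]
    rw [rip2 hM u c, hv]

theorem etainv_img_v (hM : IsMoufang Q) (c a : Q) :
    ⇑(etaE hM c)⁻¹ '' vline a = vline (a * c⁻¹) := by
  apply img_line_eq
  · rintro ⟨x, y⟩ hx
    simp only [mem_vline] at hx ⊢
    rw [show ((etaE hM c)⁻¹ (x,y)).1 = x * c⁻¹ from rfl, hx]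
  · rintro ⟨u, v⟩ hu
    simp only [mem_vline] at hu
    refine ⟨(a, (c⁻¹ * v) * c⁻¹), rfl, ?_⟩
    simp only [etaE_inv_apply]
    rw [rip1 hM (c⁻¹ * v) c, lip1 hM c v, hu]

theorem etainv_img_t (hM : IsMoufang Q) (c z : Q) :
    ⇑(etaE hM c)⁻¹ '' tline z = tline (z * c) := by
  apply img_line_eq
  · rintro ⟨x, y⟩ hxy
    simp only [mem_tline] at hxy
    simp only [mem_tline, etaE_inv_apply]
    rw [rstar hM x c y, hxy]
  · rintro ⟨u, v⟩ huv
    simp only [mem_tline] at huv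
    refine ⟨(u * c, (u * c)⁻¹ * z), ?_, ?_⟩
    · simp only [mem_tline]
      exact lip1 hM _ z
    · have hx : (u * c) * c⁻¹ = u := rip2 hM u c
      have hprod := rstar hM (u * c) c ((u * c)⁻¹ * z)
      rw [lip1 hM (u * c) z, hx] at hprod
      have h2 : c * (((u * c)⁻¹ * z) * c) = v :=
        mul_left_cancel' (hprod.trans huv.symm)
      simp only [etaE_inv_apply]
      rw [hx, h2]

theorem etap_img_h (hM : IsMoufang Q) (c d : Q) :
    ⇑(etapE hM c) '' hline d = hline (c * d) := by
  apply img_line_eq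
  · rintro ⟨x, y⟩ hy
    simp only [mem_hline] at hy ⊢
    rw [show ((etapE hM c) (x,y)).2 = c * y from rfl, hy]
  · rintro ⟨u, v⟩ hv
    simp only [mem_hline] at hv
    refine ⟨(c * (u * c), d), rfl, ?_⟩
    simp only [etapE_apply]
    rw [lip2 hM c (u * c), rip2 hM u c, hv]

theorem etap_img_v (hM : IsMoufang Q) (c a : Q) :
    ⇑(etapE hM c) '' vline a = vline ((c⁻¹ * a) * c⁻¹) := by
  apply img_line_eq
  · rintro ⟨x, y⟩ hx
    simp only [mem_vline] at hx ⊢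
    rw [show ((etapE hM c) (x,y)).1 = (c⁻¹ * x) * c⁻¹ from rfl, hx]
  · rintro ⟨u, v⟩ hu
    simp only [mem_vline] at hu
    refine ⟨(a, c⁻¹ * v), rfl, ?_⟩
    simp only [etapE_apply]
    rw [lip1 hM c v, hu]

theorem etap_img_t (hM : IsMoufang Q) (c z : Q) :
    ⇑(etapE hM c) '' tline z = tline (c⁻¹ * z) := by
  apply img_line_eq
  · rintro ⟨x, y⟩ hxy
    simp only [mem_tline] at hxy
    simp only [mem_tline, etapE_apply]
    rw [etap_prod hM c x y, hxy]
  · rintro ⟨u, v⟩ huv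
    simp only [mem_tline] at huv
    refine ⟨(c * (u * c), (c * (u * c))⁻¹ * z), ?_, ?_⟩
    · simp only [mem_tline]
      exact lip1 hM _ z
    · have hx : (c⁻¹ * (c * (u * c))) * c⁻¹ = u := by
        rw [lip2 hM c (u * c), rip2 hM u c]
      have hprod := etap_prod hM c (c * (u * c)) ((c * (u * c))⁻¹ * z)
      rw [lip1 hM (c * (u * c)) z, hx] at hprod
      have h2 : c * ((c * (u * c))⁻¹ * z) = v :=
        mul_left_cancel' (hprod.trans huv.symm)
      simp only [etapE_apply]
      rw [hx, h2]

theorem etapinv_img_h (hM : IsMoufang Q) (c d : Q) :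
    ⇑(etapE hM c)⁻¹ '' hline d = hline (c⁻¹ * d) := by
  apply img_line_eq
  · rintro ⟨x, y⟩ hy
    simp only [mem_hline] at hy ⊢
    rw [show ((etapE hM c)⁻¹ (x,y)).2 = c⁻¹ * y from rfl, hy]
  · rintro ⟨u, v⟩ hv
    simp only [mem_hline] at hv
    refine ⟨((c⁻¹ * u) * c⁻¹, d), rfl, ?_⟩
    simp only [etapE_inv_apply]
    rw [rip1 hM (c⁻¹ * u) c, lip1 hM c u, hv]

theorem etapinv_img_v (hM : IsMoufang Q) (c a : Q) :
    ⇑(etapE hM c)⁻¹ '' vline a = vline (c * (a * c)) := by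
  apply img_line_eq
  · rintro ⟨x, y⟩ hx
    simp only [mem_vline] at hx ⊢
    rw [show ((etapE hM c)⁻¹ (x,y)).1 = c * (x * c) from rfl, hx]
  · rintro ⟨u, v⟩ hu
    simp only [mem_vline] at hu
    refine ⟨(a, c * v), rfl, ?_⟩
    simp only [etapE_inv_apply]
    rw [lip2 hM c v, hu]

theorem etapinv_img_t (hM : IsMoufang Q) (c z : Q) :
    ⇑(etapE hM c)⁻¹ '' tline z = tline (c * z) := by
  apply img_line_eq
  · rintro ⟨x, y⟩ hxy
    simp only [mem_tline] at hxy
    simp only [mem_tline, etapE_inv_apply]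
    rw [lstar hM c x y, hxy]
  · rintro ⟨u, v⟩ huv
    simp only [mem_tline] at huv
    refine ⟨((c⁻¹ * u) * c⁻¹, ((c⁻¹ * u) * c⁻¹)⁻¹ * z), ?_, ?_⟩
    · simp only [mem_tline]
      exact lip1 hM _ z
    · have hx : c * (((c⁻¹ * u) * c⁻¹) * c) = u := by
        rw [rip1 hM (c⁻¹ * u) c, lip1 hM c u]
      have hprod := lstar hM c ((c⁻¹ * u) * c⁻¹) (((c⁻¹ * u) * c⁻¹)⁻¹ * z)
      rw [lip1 hM ((c⁻¹ * u) * c⁻¹) z, hx] at hprod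
      have h2 : c⁻¹ * (((c⁻¹ * u) * c⁻¹)⁻¹ * z) = v :=
        mul_left_cancel' (hprod.trans huv.symm)
      simp only [etapE_inv_apply]
      rw [hx, h2]

theorem tau_img_h (hM : IsMoufang Q) (c d : Q) :
    ⇑(tauE hM c) '' hline d = hline (d * c⁻¹) := by
  apply img_line_eq
  · rintro ⟨x, y⟩ hy
    simp only [mem_hline] at hy ⊢
    rw [show ((tauE hM c) (x,y)).2 = y * c⁻¹ from rfl, hy]
  · rintro ⟨u, v⟩ hv
    simp only [mem_hline] at hv
    refine ⟨(c * u, d), rfl, ?_⟩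
    simp only [tauE_apply]
    rw [lip2 hM c u, hv]

theorem tau_img_v (hM : IsMoufang Q) (c a : Q) :
    ⇑(tauE hM c) '' vline a = vline (c⁻¹ * a) := by
  apply img_line_eq
  · rintro ⟨x, y⟩ hx
    simp only [mem_vline] at hx ⊢
    rw [show ((tauE hM c) (x,y)).1 = c⁻¹ * x from rfl, hx]
  · rintro ⟨u, v⟩ hu
    simp only [mem_vline] at hu
    refine ⟨(a, v * c), rfl, ?_⟩
    simp only [tauE_apply]
    rw [rip2 hM v c, hu]

theorem tau_img_t (hM : IsMoufang Q) (c z : Q) :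
    ⇑(tauE hM c) '' tline z = tline ((c⁻¹ * z) * c⁻¹) := by
  apply img_line_eq
  · rintro ⟨x, y⟩ hxy
    simp only [mem_tline] at hxy
    simp only [mem_tline, tauE_apply]
    rw [tau_prod hM c x y, hxy]
  · rintro ⟨u, v⟩ huv
    simp only [mem_tline] at huv
    refine ⟨(c * u, (c * u)⁻¹ * z), ?_, ?_⟩
    · simp only [mem_tline]
      exact lip1 hM _ z
    · have hx : c⁻¹ * (c * u) = u := lip2 hM c u
      have hprod := tau_prod hM c (c * u) ((c * u)⁻¹ * z)
      rw [lip1 hM (c * u) z, hx] at hprod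
      have h2 : ((c * u)⁻¹ * z) * c⁻¹ = v :=
        mul_left_cancel' (hprod.trans huv.symm)
      simp only [tauE_apply]
      rw [hx, h2]

theorem tauinv_img_h (hM : IsMoufang Q) (c d : Q) :
    ⇑(tauE hM c)⁻¹ '' hline d = hline (d * c) := by
  apply img_line_eq
  · rintro ⟨x, y⟩ hy
    simp only [mem_hline] at hy ⊢
    rw [show ((tauE hM c)⁻¹ (x,y)).2 = y * c from rfl, hy]
  · rintro ⟨u, v⟩ hv
    simp only [mem_hline] at hv
    refine ⟨(c⁻¹ * u, d), rfl, ?_⟩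
    simp only [tauE_inv_apply]
    rw [lip1 hM c u, hv]

theorem tauinv_img_v (hM : IsMoufang Q) (c a : Q) :
    ⇑(tauE hM c)⁻¹ '' vline a = vline (c * a) := by
  apply img_line_eq
  · rintro ⟨x, y⟩ hx
    simp only [mem_vline] at hx ⊢
    rw [show ((tauE hM c)⁻¹ (x,y)).1 = c * x from rfl, hx]
  · rintro ⟨u, v⟩ hu
    simp only [mem_vline] at hu
    refine ⟨(a, v * c⁻¹), rfl, ?_⟩
    simp only [tauE_inv_apply]
    rw [rip1 hM v c, hu]

theorem tauinv_img_t (hM : IsMoufang Q) (c z : Q) :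
    ⇑(tauE hM c)⁻¹ '' tline z = tline ((c * z) * c) := by
  apply img_line_eq
  · rintro ⟨x, y⟩ hxy
    simp only [mem_tline] at hxy
    simp only [mem_tline, tauE_inv_apply]
    rw [← midmuf hM c x y, hxy]
  · rintro ⟨u, v⟩ huv
    simp only [mem_tline] at huv
    refine ⟨(c⁻¹ * u, (c⁻¹ * u)⁻¹ * z), ?_, ?_⟩
    · simp only [mem_tline]
      exact lip1 hM _ z
    · have hx : c * (c⁻¹ * u) = u := lip1 hM c u
      have hprod := (midmuf hM c (c⁻¹ * u) ((c⁻¹ * u)⁻¹ * z)).symm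
      rw [lip1 hM (c⁻¹ * u) z, hx] at hprod
      have h2 : ((c⁻¹ * u)⁻¹ * z) * c = v :=
        mul_left_cancel' (hprod.trans huv.symm)
      simp only [tauE_inv_apply]
      rw [hx, h2]

end MoufangProof
namespace MoufangProof
open Loop

set_option linter.unusedSectionVars false

variable {Q : Type*} [Loop Q]

theorem bolSpec_Hc (hM : IsMoufang Q) (c : Q) :
    (loopNet Q).BolSpec 0 (hline c) (HcE hM c) := by
  intro j k hj hk hjk
  fin_cases j <;> fin_cases k
  · exact absurd rfl hj
  · exact absurd rfl hj
  · exact absurd rfl hj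
  · exact absurd rfl hk
  · exact absurd rfl hjk
  · -- j = 1 (vertical), k = 2 (transversal)
    rintro p aj ⟨a, rfl⟩ ak ⟨z, rfl⟩ hpj hpk qj hqj1 hqj2 qk hqk1 hqk2 bj ⟨b, rfl⟩
      bk ⟨w, rfl⟩ hqkb hqjb
    simp only [mem_vline, mem_hline, mem_tline] at hpj hpk hqj1 hqj2 hqk1 hqk2 hqkb hqjb
    constructor
    · show ((HcE hM c) p).1 = b
      simp only [HcE_apply]
      rw [hpk, ← hqk1, hqk2, rip2 hM qk.1 c]
      exact hqkb
    · show ((HcE hM c) p).1 * ((HcE hM c) p).2 = w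
      simp only [HcE_apply]
      rw [Hc_prod hM c p.1 p.2, hpj, ← hqjb, hqj1, hqj2]
  · exact absurd rfl hk
  · -- j = 2 (transversal), k = 1 (vertical)
    rintro p aj ⟨z, rfl⟩ ak ⟨a, rfl⟩ hpj hpk qj hqj1 hqj2 qk hqk1 hqk2 bj ⟨w, rfl⟩
      bk ⟨b, rfl⟩ hqkb hqjb
    simp only [mem_vline, mem_hline, mem_tline] at hpj hpk hqj1 hqj2 hqk1 hqk2 hqkb hqjb
    constructor
    · show ((HcE hM c) p).1 * ((HcE hM c) p).2 = w
      simp only [HcE_apply]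
      rw [Hc_prod hM c p.1 p.2, hpk, ← hqkb, hqk1, hqk2]
    · show ((HcE hM c) p).1 = b
      simp only [HcE_apply]
      rw [hpj, ← hqj1, hqj2, rip2 hM qj.1 c]
      exact hqjb
  · exact absurd rfl hjk

theorem bolSpec_Vc (hM : IsMoufang Q) (c : Q) :
    (loopNet Q).BolSpec 1 (vline c) (VcE hM c) := by
  intro j k hj hk hjk
  fin_cases j <;> fin_cases k
  · exact absurd rfl hjk
  · exact absurd rfl hk
  · -- j = 0 (horizontal), k = 2 (transversal)
    rintro p aj ⟨d, rfl⟩ ak ⟨z, rfl⟩ hpj hpk qj hqj1 hqj2 qk hqk1 hqk2 bj ⟨b, rfl⟩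
      bk ⟨w, rfl⟩ hqkb hqjb
    simp only [mem_vline, mem_hline, mem_tline] at hpj hpk hqj1 hqj2 hqk1 hqk2 hqkb hqjb
    constructor
    · show ((VcE hM c) p).2 = b
      simp only [VcE_apply]
      rw [hpk, ← hqk1, hqk2, lip2 hM c qk.2]
      exact hqkb
    · show ((VcE hM c) p).1 * ((VcE hM c) p).2 = w
      simp only [VcE_apply]
      rw [Vc_prod hM c p.1 p.2, hpj, ← hqjb, hqj1, hqj2]
  · exact absurd rfl hj
  · exact absurd rfl hj
  · exact absurd rfl hj
  · -- j = 2 (transversal), k = 0 (horizontal)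
    rintro p aj ⟨z, rfl⟩ ak ⟨d, rfl⟩ hpj hpk qj hqj1 hqj2 qk hqk1 hqk2 bj ⟨w, rfl⟩
      bk ⟨b, rfl⟩ hqkb hqjb
    simp only [mem_vline, mem_hline, mem_tline] at hpj hpk hqj1 hqj2 hqk1 hqk2 hqkb hqjb
    constructor
    · show ((VcE hM c) p).1 * ((VcE hM c) p).2 = w
      simp only [VcE_apply]
      rw [Vc_prod hM c p.1 p.2, hpk, ← hqkb, hqk1, hqk2]
    · show ((VcE hM c) p).2 = b
      simp only [VcE_apply]
      rw [hpj, ← hqj1, hqj2, lip2 hM c qj.2]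
      exact hqjb
  · exact absurd rfl hk
  · exact absurd rfl hjk

theorem bolSpec_Tc (hM : IsMoufang Q) (c : Q) :
    (loopNet Q).BolSpec 2 (tline c) (TcE hM c) := by
  intro j k hj hk hjk
  fin_cases j <;> fin_cases k
  · exact absurd rfl hjk
  · -- j = 0 (horizontal), k = 1 (vertical)
    rintro p aj ⟨d, rfl⟩ ak ⟨a, rfl⟩ hpj hpk qj hqj1 hqj2 qk hqk1 hqk2 bj ⟨b, rfl⟩
      bk ⟨w, rfl⟩ hqkb hqjb
    simp only [mem_vline, mem_hline, mem_tline] at hpj hpk hqj1 hqj2 hqk1 hqk2 hqkb hqjb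
    constructor
    · show ((TcE hM c) p).2 = b
      simp only [TcE_apply]
      -- qk ∈ vline a ∩ tline c : qk.1 = a, qk.1 * qk.2 = c; p ∈ vline a: p.1 = a
      -- (p.1)⁻¹ * c = qk.2 = b
      rw [hpk, ← hqk2, ← hqk1, lip2 hM qk.1 qk.2]
      exact hqkb
    · show ((TcE hM c) p).1 = w
      simp only [TcE_apply]
      -- qj ∈ hline d ∩ tline c : qj.2 = d, qj.1 * qj.2 = c; p ∈ hline d : p.2 = d
      -- c * (p.2)⁻¹ = qj.1 = w
      rw [hpj, ← hqj1, ← hqj2, rip2 hM qj.1 qj.2]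
      exact hqjb
  · exact absurd rfl hk
  · -- j = 1 (vertical), k = 0 (horizontal)
    rintro p aj ⟨a, rfl⟩ ak ⟨d, rfl⟩ hpj hpk qj hqj1 hqj2 qk hqk1 hqk2 bj ⟨b, rfl⟩
      bk ⟨w, rfl⟩ hqkb hqjb
    simp only [mem_vline, mem_hline, mem_tline] at hpj hpk hqj1 hqj2 hqk1 hqk2 hqkb hqjb
    constructor
    · show ((TcE hM c) p).1 = b
      simp only [TcE_apply]
      rw [hpk, ← hqk1, ← hqk2, rip2 hM qk.1 qk.2]
      exact hqkb
    · show ((TcE hM c) p).2 = w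
      simp only [TcE_apply]
      rw [hpj, ← hqj2, ← hqj1, lip2 hM qj.1 qj.2]
      exact hqjb
  · exact absurd rfl hjk
  · exact absurd rfl hk
  · exact absurd rfl hj
  · exact absurd rfl hj
  · exact absurd rfl hj

end MoufangProof
namespace MoufangProof
open Loop

set_option linter.unusedSectionVars false

variable {Q : Type*} [Loop Q]

theorem isColl_Hc (hM : IsMoufang Q) (c : Q) : (loopNet Q).IsColl (HcE hM c) := by
  have key : ∀ ℓ, (loopNet Q).IsLine ℓ → (loopNet Q).IsLine (⇑(HcE hM c) '' ℓ) := by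
    rintro ℓ ⟨i, hi⟩
    fin_cases i
    · obtain ⟨d, rfl⟩ := hi
      exact ⟨0, c * (d⁻¹ * c), Hc_img_h hM c d⟩
    · obtain ⟨a, rfl⟩ := hi
      exact ⟨2, a * c, Hc_img_v hM c a⟩
    · obtain ⟨z, rfl⟩ := hi
      exact ⟨1, z * c⁻¹, Hc_img_t hM c z⟩
  refine ⟨key, ?_⟩
  rw [HcE_inv]
  exact key

theorem isColl_Vc (hM : IsMoufang Q) (c : Q) : (loopNet Q).IsColl (VcE hM c) := by
  have key : ∀ ℓ, (loopNet Q).IsLine ℓ → (loopNet Q).IsLine (⇑(VcE hM c) '' ℓ) := by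
    rintro ℓ ⟨i, hi⟩
    fin_cases i
    · obtain ⟨d, rfl⟩ := hi
      exact ⟨2, c * d, Vc_img_h hM c d⟩
    · obtain ⟨a, rfl⟩ := hi
      exact ⟨1, c * (a⁻¹ * c), Vc_img_v hM c a⟩
    · obtain ⟨z, rfl⟩ := hi
      exact ⟨0, c⁻¹ * z, Vc_img_t hM c z⟩
  refine ⟨key, ?_⟩
  rw [VcE_inv]
  exact key

theorem isColl_Tc (hM : IsMoufang Q) (c : Q) : (loopNet Q).IsColl (TcE hM c) := by
  have key : ∀ ℓ, (loopNet Q).IsLine ℓ → (loopNet Q).IsLine (⇑(TcE hM c) '' ℓ) := by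
    rintro ℓ ⟨i, hi⟩
    fin_cases i
    · obtain ⟨d, rfl⟩ := hi
      exact ⟨1, c * d⁻¹, Tc_img_h hM c d⟩
    · obtain ⟨a, rfl⟩ := hi
      exact ⟨0, a⁻¹ * c, Tc_img_v hM c a⟩
    · obtain ⟨z, rfl⟩ := hi
      exact ⟨2, (c * z⁻¹) * c, Tc_img_t hM c z⟩
  refine ⟨key, ?_⟩
  rw [TcE_inv]
  exact key

theorem Hc_mem_M (hM : IsMoufang Q) (c : Q) : HcE hM c ∈ (loopNet Q).MGroup :=
  Subgroup.subset_closure ⟨hline c, ⟨0, ⟨c, rfl⟩, bolSpec_Hc hM c⟩, isColl_Hc hM c⟩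

theorem Vc_mem_M (hM : IsMoufang Q) (c : Q) : VcE hM c ∈ (loopNet Q).MGroup :=
  Subgroup.subset_closure ⟨vline c, ⟨1, ⟨c, rfl⟩, bolSpec_Vc hM c⟩, isColl_Vc hM c⟩

theorem Tc_mem_M (hM : IsMoufang Q) (c : Q) : TcE hM c ∈ (loopNet Q).MGroup :=
  Subgroup.subset_closure ⟨tline c, ⟨2, ⟨c, rfl⟩, bolSpec_Tc hM c⟩, isColl_Tc hM c⟩

theorem eta_mem_dirPres (hM : IsMoufang Q) (c : Q) : etaE hM c ∈ (loopNet Q).dirPres := by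
  intro i ℓ hℓ
  fin_cases i
  · obtain ⟨d, rfl⟩ := hℓ
    exact ⟨⟨_, eta_img_h hM c d⟩, ⟨_, etainv_img_h hM c d⟩⟩
  · obtain ⟨a, rfl⟩ := hℓ
    exact ⟨⟨_, eta_img_v hM c a⟩, ⟨_, etainv_img_v hM c a⟩⟩
  · obtain ⟨z, rfl⟩ := hℓ
    exact ⟨⟨_, eta_img_t hM c z⟩, ⟨_, etainv_img_t hM c z⟩⟩

theorem etap_mem_dirPres (hM : IsMoufang Q) (c : Q) : etapE hM c ∈ (loopNet Q).dirPres := by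
  intro i ℓ hℓ
  fin_cases i
  · obtain ⟨d, rfl⟩ := hℓ
    exact ⟨⟨_, etap_img_h hM c d⟩, ⟨_, etapinv_img_h hM c d⟩⟩
  · obtain ⟨a, rfl⟩ := hℓ
    exact ⟨⟨_, etap_img_v hM c a⟩, ⟨_, etapinv_img_v hM c a⟩⟩
  · obtain ⟨z, rfl⟩ := hℓ
    exact ⟨⟨_, etap_img_t hM c z⟩, ⟨_, etapinv_img_t hM c z⟩⟩

theorem tau_mem_dirPres (hM : IsMoufang Q) (c : Q) : tauE hM c ∈ (loopNet Q).dirPres := by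
  intro i ℓ hℓ
  fin_cases i
  · obtain ⟨d, rfl⟩ := hℓ
    exact ⟨⟨_, tau_img_h hM c d⟩, ⟨_, tauinv_img_h hM c d⟩⟩
  · obtain ⟨a, rfl⟩ := hℓ
    exact ⟨⟨_, tau_img_v hM c a⟩, ⟨_, tauinv_img_v hM c a⟩⟩
  · obtain ⟨z, rfl⟩ := hℓ
    exact ⟨⟨_, tau_img_t hM c z⟩, ⟨_, tauinv_img_t hM c z⟩⟩

theorem eta_mem_MZero (hM : IsMoufang Q) (c : Q) : etaE hM c ∈ (loopNet Q).MZero := by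
  refine Subgroup.mem_inf.mpr ⟨?_, eta_mem_dirPres hM c⟩
  rw [etaE_eq hM c]
  exact mul_mem (Hc_mem_M hM 1) (Hc_mem_M hM c)

theorem etap_mem_MZero (hM : IsMoufang Q) (c : Q) : etapE hM c ∈ (loopNet Q).MZero := by
  refine Subgroup.mem_inf.mpr ⟨?_, etap_mem_dirPres hM c⟩
  rw [etapE_eq hM c]
  exact mul_mem (Vc_mem_M hM 1) (Vc_mem_M hM c)

theorem tau_mem_MZero (hM : IsMoufang Q) (c : Q) : tauE hM c ∈ (loopNet Q).MZero := by
  refine Subgroup.mem_inf.mpr ⟨?_, tau_mem_dirPres hM c⟩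
  rw [tauE_eq hM c]
  exact mul_mem (Tc_mem_M hM 1) (Tc_mem_M hM c)

/-! Distinctness of line types for nontrivial `Q`. -/

theorem tline_ne_hline {z d a0 : Q} (ha0 : a0 ≠ 1) : tline z ≠ hline d := by
  intro h
  have h1 : ((1 : Q), d) ∈ tline z := h ▸ (rfl : ((1:Q), d) ∈ hline d)
  have h2 : (a0, d) ∈ tline z := h ▸ (rfl : (a0, d) ∈ hline d)
  simp only [mem_tline] at h1 h2
  exact ha0 (mul_right_cancel' (h2.trans h1.symm))

theorem tline_ne_vline {z a a0 : Q} (ha0 : a0 ≠ 1) : tline z ≠ vline a := by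
  intro h
  have h1 : (a, (1 : Q)) ∈ tline z := h ▸ (rfl : (a, (1:Q)) ∈ vline a)
  have h2 : (a, a0) ∈ tline z := h ▸ (rfl : (a, a0) ∈ vline a)
  simp only [mem_tline] at h1 h2
  exact ha0 (mul_left_cancel' (h2.trans h1.symm))

theorem vline_ne_hline {a d a0 : Q} (ha0 : a0 ≠ 1) : vline a ≠ hline d := by
  intro h
  have h1 : (a, (1 : Q)) ∈ hline d := h ▸ (rfl : (a, (1:Q)) ∈ vline a)
  have h2 : (a, a0) ∈ hline d := h ▸ (rfl : (a, a0) ∈ vline a)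
  simp only [mem_hline] at h1 h2
  exact ha0 (h2.trans h1.symm)

end MoufangProof
namespace MoufangProof
open Loop

set_option linter.unusedSectionVars false

variable {Q : Type*} [Loop Q]

/-! Coordinates of direction preserving collineations. -/

/-- The first-coordinate component of a direction preserving collineation. -/
def af (g : Equiv.Perm (Q × Q)) (x : Q) : Q := (g (x, 1)).1
/-- The second-coordinate component of a direction preserving collineation. -/
def bf (g : Equiv.Perm (Q × Q)) (y : Q) : Q := (g (1, y)).2

theorem fst_eq_af {g : Equiv.Perm (Q × Q)} (hg : g ∈ (loopNet Q).dirPres) (p : Q × Q) :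
    (g p).1 = af g p.1 := by
  obtain ⟨c, hc⟩ := (hg 1 (vline p.1) ⟨p.1, rfl⟩).1
  have h1 : g p ∈ ⇑g '' vline p.1 := ⟨p, rfl, rfl⟩
  have h2 : g (p.1, 1) ∈ ⇑g '' vline p.1 := ⟨(p.1, 1), rfl, rfl⟩
  rw [hc] at h1 h2
  exact (mem_vline.mp h1).trans (mem_vline.mp h2).symm

theorem snd_eq_bf {g : Equiv.Perm (Q × Q)} (hg : g ∈ (loopNet Q).dirPres) (p : Q × Q) :
    (g p).2 = bf g p.2 := by
  obtain ⟨c, hc⟩ := (hg 0 (hline p.2) ⟨p.2, rfl⟩).1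
  have h1 : g p ∈ ⇑g '' hline p.2 := ⟨p, rfl, rfl⟩
  have h2 : g (1, p.2) ∈ ⇑g '' hline p.2 := ⟨(1, p.2), rfl, rfl⟩
  rw [hc] at h1 h2
  exact (mem_hline.mp h1).trans (mem_hline.mp h2).symm

theorem _root_.Equiv.Perm.inv_apply_self {α : Type*} (f : Equiv.Perm α) (x : α) :
    f⁻¹ (f x) = x := f.symm_apply_apply x

theorem _root_.Equiv.Perm.apply_inv_self {α : Type*} (f : Equiv.Perm α) (x : α) :
    f (f⁻¹ x) = x := f.apply_symm_apply x

theorem apply_eq_af_bf {g : Equiv.Perm (Q × Q)} (hg : g ∈ (loopNet Q).dirPres) (p : Q × Q) :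
    g p = (af g p.1, bf g p.2) :=
  Prod.ext (fst_eq_af hg p) (snd_eq_bf hg p)

theorem atop {g : Equiv.Perm (Q × Q)} (hg : g ∈ (loopNet Q).dirPres) (x y : Q) :
    af g x * bf g y = af g (x * y) * bf g 1 := by
  obtain ⟨c, hc⟩ := (hg 2 (tline (x * y)) ⟨x * y, rfl⟩).1
  have h1 : g (x, y) ∈ ⇑g '' tline (x * y) := ⟨(x, y), rfl, rfl⟩
  have h2 : g (x * y, 1) ∈ ⇑g '' tline (x * y) :=
    ⟨(x * y, 1), mem_tline.mpr (Loop.mul_one _), rfl⟩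
  rw [hc] at h1 h2
  have e1 := mem_tline.mp h1
  have e2 := mem_tline.mp h2
  rw [apply_eq_af_bf hg (x, y)] at e1
  rw [apply_eq_af_bf hg (x * y, 1)] at e2
  exact e1.trans e2.symm

theorem af_mul {g h : Equiv.Perm (Q × Q)} (hg : g ∈ (loopNet Q).dirPres) (x : Q) :
    af (g * h) x = af g (af h x) := by
  show ((g * h) (x, 1)).1 = af g (af h x)
  rw [Equiv.Perm.mul_apply, fst_eq_af hg (h (x, 1))]
  rfl

theorem bf_mul {g h : Equiv.Perm (Q × Q)} (hg : g ∈ (loopNet Q).dirPres) (y : Q) :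
    bf (g * h) y = bf g (bf h y) := by
  show ((g * h) (1, y)).2 = bf g (bf h y)
  rw [Equiv.Perm.mul_apply, snd_eq_bf hg (h (1, y))]
  rfl

theorem af_inv_af {g : Equiv.Perm (Q × Q)} (hg : g ∈ (loopNet Q).dirPres) (x : Q) :
    af g⁻¹ (af g x) = x := by
  have h := fst_eq_af (Subgroup.inv_mem _ hg) (g (x, 1))
  rw [Equiv.Perm.inv_apply_self] at h
  exact h.symm

theorem af_af_inv {g : Equiv.Perm (Q × Q)} (hg : g ∈ (loopNet Q).dirPres) (x : Q) :
    af g (af g⁻¹ x) = x := by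
  have h := fst_eq_af hg (g⁻¹ (x, 1))
  rw [Equiv.Perm.apply_inv_self] at h
  exact h.symm

theorem bf_inv_bf {g : Equiv.Perm (Q × Q)} (hg : g ∈ (loopNet Q).dirPres) (y : Q) :
    bf g⁻¹ (bf g y) = y := by
  have h := snd_eq_bf (Subgroup.inv_mem _ hg) (g (1, y))
  rw [Equiv.Perm.inv_apply_self] at h
  exact h.symm

theorem bf_bf_inv {g : Equiv.Perm (Q × Q)} (hg : g ∈ (loopNet Q).dirPres) (y : Q) :
    bf g (bf g⁻¹ y) = y := by
  have h := snd_eq_bf hg (g⁻¹ (1, y))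
  rw [Equiv.Perm.apply_inv_self] at h
  exact h.symm

@[simp] theorem af_one (x : Q) : af (1 : Equiv.Perm (Q × Q)) x = x := rfl
@[simp] theorem bf_one (y : Q) : bf (1 : Equiv.Perm (Q × Q)) y = y := rfl

@[simp] theorem af_eta (hM : IsMoufang Q) (c x : Q) : af (etaE hM c) x = x * c := rfl
@[simp] theorem bf_eta (hM : IsMoufang Q) (c y : Q) :
    bf (etaE hM c) y = (c⁻¹ * y) * c⁻¹ := rfl
@[simp] theorem af_etap (hM : IsMoufang Q) (c x : Q) :
    af (etapE hM c) x = (c⁻¹ * x) * c⁻¹ := rfl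
@[simp] theorem bf_etap (hM : IsMoufang Q) (c y : Q) : bf (etapE hM c) y = c * y := rfl
@[simp] theorem af_tau (hM : IsMoufang Q) (c x : Q) : af (tauE hM c) x = c⁻¹ * x := rfl
@[simp] theorem bf_tau (hM : IsMoufang Q) (c y : Q) : bf (tauE hM c) y = y * c⁻¹ := rfl

/-- If the first component of a direction preserving collineation is the identity,
its second component is right translation by an element of the right nucleus. -/
theorem af_id_struct {g : Equiv.Perm (Q × Q)} (hg : g ∈ (loopNet Q).dirPres)
    (ha : ∀ x, af g x = x) :
    (∀ y, bf g y = y * bf g 1) ∧ (∀ x y, x * (y * bf g 1) = (x * y) * bf g 1) := by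
  have key : ∀ x y, x * bf g y = (x * y) * bf g 1 := by
    intro x y
    have h := atop hg x y
    rwa [ha x, ha (x * y)] at h
  constructor
  · intro y
    have h := key 1 y
    rwa [Loop.one_mul, Loop.one_mul] at h
  · intro x y
    have h := key x y
    rw [← h]
    have h2 := key 1 y
    rw [Loop.one_mul, Loop.one_mul] at h2
    rw [h2]

end MoufangProof
namespace MoufangProof
open Loop

set_option linter.unusedSectionVars false

variable {Q : Type*} [Loop Q]

/-! Conjugation by the three basic reflections. -/

theorem conj_s0_apply (hM : IsMoufang Q) {k : Equiv.Perm (Q × Q)}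
    (hk : k ∈ (loopNet Q).dirPres) (x y : Q) :
    (HcE hM 1 * k * HcE hM 1) (x, y)
      = (af k (x * y) * bf k y⁻¹, (bf k y⁻¹)⁻¹) := by
  show (HcE hM 1) (k ((HcE hM 1) (x, y))) = _
  rw [HcE_one_apply hM (x, y)]
  rw [apply_eq_af_bf hk (x * y, y⁻¹)]
  rw [HcE_one_apply hM _]

theorem conj_s1_apply (hM : IsMoufang Q) {k : Equiv.Perm (Q × Q)}
    (hk : k ∈ (loopNet Q).dirPres) (x y : Q) :
    (VcE hM 1 * k * VcE hM 1) (x, y)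
      = ((af k x⁻¹)⁻¹, af k x⁻¹ * bf k (x * y)) := by
  show (VcE hM 1) (k ((VcE hM 1) (x, y))) = _
  rw [VcE_one_apply hM (x, y)]
  rw [apply_eq_af_bf hk (x⁻¹, x * y)]
  rw [VcE_one_apply hM _]

theorem conj_s2_apply (hM : IsMoufang Q) {k : Equiv.Perm (Q × Q)}
    (hk : k ∈ (loopNet Q).dirPres) (x y : Q) :
    (TcE hM 1 * k * TcE hM 1) (x, y)
      = ((bf k x⁻¹)⁻¹, (af k y⁻¹)⁻¹) := by
  show (TcE hM 1) (k ((TcE hM 1) (x, y))) = _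
  rw [TcE_one_apply hM (x, y)]
  rw [apply_eq_af_bf hk (y⁻¹, x⁻¹)]
  rw [TcE_one_apply hM _]

theorem conj_s0_mem_dirPres (hM : IsMoufang Q) {k : Equiv.Perm (Q × Q)}
    (hk : k ∈ (loopNet Q).dirPres) :
    HcE hM 1 * k * HcE hM 1 ∈ (loopNet Q).dirPres := by
  have himg : ∀ g, g ∈ (loopNet Q).dirPres → ∀ i, ∀ ℓ ∈ (loopNet Q).lines i,
      ⇑(HcE hM 1 * g * HcE hM 1) '' ℓ ∈ (loopNet Q).lines i := by
    intro g hg i ℓ hℓ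
    have hcomp : ⇑(HcE hM 1 * g * HcE hM 1) '' ℓ
        = ⇑(HcE hM 1) '' (⇑g '' (⇑(HcE hM 1) '' ℓ)) := by
      rw [← Set.image_comp, ← Set.image_comp]; rfl
    rw [hcomp]
    fin_cases i
    · obtain ⟨d, rfl⟩ := hℓ
      rw [Hc_img_h hM 1 d]
      obtain ⟨e, he⟩ := (hg 0 (hline (1 * (d⁻¹ * 1))) ⟨_, rfl⟩).1
      rw [he, Hc_img_h hM 1 e]
      exact ⟨_, rfl⟩
    · obtain ⟨a, rfl⟩ := hℓ
      rw [Hc_img_v hM 1 a]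
      obtain ⟨e, he⟩ := (hg 2 (tline (a * 1)) ⟨_, rfl⟩).1
      rw [he, Hc_img_t hM 1 e]
      exact ⟨_, rfl⟩
    · obtain ⟨z, rfl⟩ := hℓ
      rw [Hc_img_t hM 1 z]
      obtain ⟨e, he⟩ := (hg 1 (vline (z * 1⁻¹)) ⟨_, rfl⟩).1
      rw [he, Hc_img_v hM 1 e]
      exact ⟨_, rfl⟩
  intro i ℓ hℓ
  refine ⟨himg k hk i ℓ hℓ, ?_⟩
  have hinv : (HcE hM 1 * k * HcE hM 1)⁻¹ = HcE hM 1 * k⁻¹ * HcE hM 1 := by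
    rw [_root_.mul_inv_rev, _root_.mul_inv_rev, HcE_inv, mul_assoc]
  rw [hinv]
  exact himg k⁻¹ (Subgroup.inv_mem _ hk) i ℓ hℓ

theorem conj_s1_mem_dirPres (hM : IsMoufang Q) {k : Equiv.Perm (Q × Q)}
    (hk : k ∈ (loopNet Q).dirPres) :
    VcE hM 1 * k * VcE hM 1 ∈ (loopNet Q).dirPres := by
  have himg : ∀ g, g ∈ (loopNet Q).dirPres → ∀ i, ∀ ℓ ∈ (loopNet Q).lines i,
      ⇑(VcE hM 1 * g * VcE hM 1) '' ℓ ∈ (loopNet Q).lines i := by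
    intro g hg i ℓ hℓ
    have hcomp : ⇑(VcE hM 1 * g * VcE hM 1) '' ℓ
        = ⇑(VcE hM 1) '' (⇑g '' (⇑(VcE hM 1) '' ℓ)) := by
      rw [← Set.image_comp, ← Set.image_comp]; rfl
    rw [hcomp]
    fin_cases i
    · obtain ⟨d, rfl⟩ := hℓ
      rw [Vc_img_h hM 1 d]
      obtain ⟨e, he⟩ := (hg 2 (tline (1 * d)) ⟨_, rfl⟩).1
      rw [he, Vc_img_t hM 1 e]
      exact ⟨_, rfl⟩
    · obtain ⟨a, rfl⟩ := hℓ
      rw [Vc_img_v hM 1 a]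
      obtain ⟨e, he⟩ := (hg 1 (vline (1 * (a⁻¹ * 1))) ⟨_, rfl⟩).1
      rw [he, Vc_img_v hM 1 e]
      exact ⟨_, rfl⟩
    · obtain ⟨z, rfl⟩ := hℓ
      rw [Vc_img_t hM 1 z]
      obtain ⟨e, he⟩ := (hg 0 (hline (1⁻¹ * z)) ⟨_, rfl⟩).1
      rw [he, Vc_img_h hM 1 e]
      exact ⟨_, rfl⟩
  intro i ℓ hℓ
  refine ⟨himg k hk i ℓ hℓ, ?_⟩
  have hinv : (VcE hM 1 * k * VcE hM 1)⁻¹ = VcE hM 1 * k⁻¹ * VcE hM 1 := by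
    rw [_root_.mul_inv_rev, _root_.mul_inv_rev, VcE_inv, mul_assoc]
  rw [hinv]
  exact himg k⁻¹ (Subgroup.inv_mem _ hk) i ℓ hℓ

theorem conj_s2_mem_dirPres (hM : IsMoufang Q) {k : Equiv.Perm (Q × Q)}
    (hk : k ∈ (loopNet Q).dirPres) :
    TcE hM 1 * k * TcE hM 1 ∈ (loopNet Q).dirPres := by
  have himg : ∀ g, g ∈ (loopNet Q).dirPres → ∀ i, ∀ ℓ ∈ (loopNet Q).lines i,
      ⇑(TcE hM 1 * g * TcE hM 1) '' ℓ ∈ (loopNet Q).lines i := by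
    intro g hg i ℓ hℓ
    have hcomp : ⇑(TcE hM 1 * g * TcE hM 1) '' ℓ
        = ⇑(TcE hM 1) '' (⇑g '' (⇑(TcE hM 1) '' ℓ)) := by
      rw [← Set.image_comp, ← Set.image_comp]; rfl
    rw [hcomp]
    fin_cases i
    · obtain ⟨d, rfl⟩ := hℓ
      rw [Tc_img_h hM 1 d]
      obtain ⟨e, he⟩ := (hg 1 (vline (1 * d⁻¹)) ⟨_, rfl⟩).1
      rw [he, Tc_img_v hM 1 e]
      exact ⟨_, rfl⟩
    · obtain ⟨a, rfl⟩ := hℓ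
      rw [Tc_img_v hM 1 a]
      obtain ⟨e, he⟩ := (hg 0 (hline (a⁻¹ * 1)) ⟨_, rfl⟩).1
      rw [he, Tc_img_h hM 1 e]
      exact ⟨_, rfl⟩
    · obtain ⟨z, rfl⟩ := hℓ
      rw [Tc_img_t hM 1 z]
      obtain ⟨e, he⟩ := (hg 2 (tline ((1 * z⁻¹) * 1)) ⟨_, rfl⟩).1
      rw [he, Tc_img_t hM 1 e]
      exact ⟨_, rfl⟩
  intro i ℓ hℓ
  refine ⟨himg k hk i ℓ hℓ, ?_⟩
  have hinv : (TcE hM 1 * k * TcE hM 1)⁻¹ = TcE hM 1 * k⁻¹ * TcE hM 1 := by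
    rw [_root_.mul_inv_rev, _root_.mul_inv_rev, TcE_inv, mul_assoc]
  rw [hinv]
  exact himg k⁻¹ (Subgroup.inv_mem _ hk) i ℓ hℓ

theorem conj_s0_mem_MZero (hM : IsMoufang Q) {k : Equiv.Perm (Q × Q)}
    (hk : k ∈ (loopNet Q).MZero) :
    HcE hM 1 * k * HcE hM 1 ∈ (loopNet Q).MZero := by
  obtain ⟨hk1, hk2⟩ := Subgroup.mem_inf.mp hk
  exact Subgroup.mem_inf.mpr
    ⟨mul_mem (mul_mem (Hc_mem_M hM 1) hk1) (Hc_mem_M hM 1), conj_s0_mem_dirPres hM hk2⟩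

theorem conj_s1_mem_MZero (hM : IsMoufang Q) {k : Equiv.Perm (Q × Q)}
    (hk : k ∈ (loopNet Q).MZero) :
    VcE hM 1 * k * VcE hM 1 ∈ (loopNet Q).MZero := by
  obtain ⟨hk1, hk2⟩ := Subgroup.mem_inf.mp hk
  exact Subgroup.mem_inf.mpr
    ⟨mul_mem (mul_mem (Vc_mem_M hM 1) hk1) (Vc_mem_M hM 1), conj_s1_mem_dirPres hM hk2⟩

theorem conj_s2_mem_MZero (hM : IsMoufang Q) {k : Equiv.Perm (Q × Q)}
    (hk : k ∈ (loopNet Q).MZero) :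
    TcE hM 1 * k * TcE hM 1 ∈ (loopNet Q).MZero := by
  obtain ⟨hk1, hk2⟩ := Subgroup.mem_inf.mp hk
  exact Subgroup.mem_inf.mpr
    ⟨mul_mem (mul_mem (Tc_mem_M hM 1) hk1) (Tc_mem_M hM 1), conj_s2_mem_dirPres hM hk2⟩

/-! Determination of Bol reflections by their geometric specification. -/

theorem bolSpec_det0 (hM : IsMoufang Q) {c : Q} {f : Q × Q → Q × Q}
    (hf : (loopNet Q).BolSpec 0 (hline c) f) (p : Q × Q) :
    f p = ((p.1 * p.2) * c⁻¹, c * (p.2⁻¹ * c)) := by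
  have h := hf 1 2 (by decide) (by decide) (by decide) p
    (vline p.1) ⟨p.1, rfl⟩ (tline (p.1 * p.2)) ⟨p.1 * p.2, rfl⟩ rfl rfl
    (p.1, c) rfl rfl
    ((p.1 * p.2) * c⁻¹, c) (rip1 hM (p.1 * p.2) c) rfl
    (vline ((p.1 * p.2) * c⁻¹)) ⟨_, rfl⟩ (tline (p.1 * c)) ⟨_, rfl⟩ rfl rfl
  obtain ⟨h1, h2⟩ := h
  have hfst : (f p).1 = (p.1 * p.2) * c⁻¹ := h1
  have hsnd : (f p).2 = c * (p.2⁻¹ * c) := by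
    have h2' : (f p).1 * (f p).2 = p.1 * c := h2
    rw [hfst] at h2'
    exact mul_left_cancel' (h2'.trans (Hc_prod hM c p.1 p.2).symm)
  exact Prod.ext hfst hsnd

theorem bolSpec_det1 (hM : IsMoufang Q) {c : Q} {f : Q × Q → Q × Q}
    (hf : (loopNet Q).BolSpec 1 (vline c) f) (p : Q × Q) :
    f p = (c * (p.1⁻¹ * c), c⁻¹ * (p.1 * p.2)) := by
  have h := hf 0 2 (by decide) (by decide) (by decide) p
    (hline p.2) ⟨p.2, rfl⟩ (tline (p.1 * p.2)) ⟨p.1 * p.2, rfl⟩ rfl rfl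
    (c, p.2) rfl rfl
    (c, c⁻¹ * (p.1 * p.2)) (lip1 hM c (p.1 * p.2)) rfl
    (hline (c⁻¹ * (p.1 * p.2))) ⟨_, rfl⟩ (tline (c * p.2)) ⟨_, rfl⟩ rfl rfl
  obtain ⟨h1, h2⟩ := h
  have hsnd : (f p).2 = c⁻¹ * (p.1 * p.2) := h1
  have hfst : (f p).1 = c * (p.1⁻¹ * c) := by
    have h2' : (f p).1 * (f p).2 = c * p.2 := h2
    rw [hsnd] at h2'
    exact mul_right_cancel' (h2'.trans (Vc_prod hM c p.1 p.2).symm)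
  exact Prod.ext hfst hsnd

theorem bolSpec_det2 (hM : IsMoufang Q) {c : Q} {f : Q × Q → Q × Q}
    (hf : (loopNet Q).BolSpec 2 (tline c) f) (p : Q × Q) :
    f p = (c * p.2⁻¹, p.1⁻¹ * c) := by
  have h := hf 0 1 (by decide) (by decide) (by decide) p
    (hline p.2) ⟨p.2, rfl⟩ (vline p.1) ⟨p.1, rfl⟩ rfl rfl
    (c * p.2⁻¹, p.2) rfl (rip1 hM c p.2) 
    (p.1, p.1⁻¹ * c) rfl (lip1 hM p.1 c)
    (hline (p.1⁻¹ * c)) ⟨_, rfl⟩ (vline (c * p.2⁻¹)) ⟨_, rfl⟩ rfl rfl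
  obtain ⟨h1, h2⟩ := h
  exact Prod.ext h2 h1

/-- Any Bol reflection of the net of a Moufang loop is one of the explicit ones. -/
theorem bolRefl_eq (hM : IsMoufang Q) {ℓ : Set (Q × Q)} {f : Equiv.Perm (Q × Q)}
    (h : (loopNet Q).IsBolRefl ℓ f) :
    (∃ c, f = HcE hM c) ∨ (∃ c, f = VcE hM c) ∨ (∃ c, f = TcE hM c) := by
  obtain ⟨⟨i, hi, hspec⟩, -⟩ := h
  fin_cases i
  · obtain ⟨c, rfl⟩ := hi
    exact Or.inl ⟨c, Equiv.ext fun p => bolSpec_det0 hM hspec p⟩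
  · obtain ⟨c, rfl⟩ := hi
    exact Or.inr (Or.inl ⟨c, Equiv.ext fun p => bolSpec_det1 hM hspec p⟩)
  · obtain ⟨c, rfl⟩ := hi
    exact Or.inr (Or.inr ⟨c, Equiv.ext fun p => bolSpec_det2 hM hspec p⟩)

end MoufangProof
namespace MoufangProof
open Loop

set_option linter.unusedSectionVars false

variable {Q : Type*} [Loop Q]

/-- `ρ = σ₀ σ₁`. -/
noncomputable def m1E (hM : IsMoufang Q) : Equiv.Perm (Q × Q) := HcE hM 1 * VcE hM 1
/-- `ρ² = σ₀ σ₂`. -/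
noncomputable def m2E (hM : IsMoufang Q) : Equiv.Perm (Q × Q) := HcE hM 1 * TcE hM 1

theorem m1E_apply (hM : IsMoufang Q) (p : Q × Q) :
    m1E hM p = (p.2, (p.1 * p.2)⁻¹) := by
  show (HcE hM 1) ((VcE hM 1) p) = _
  rw [VcE_one_apply, HcE_one_apply]
  rw [lip2 hM p.1 p.2]

theorem m2E_apply (hM : IsMoufang Q) (p : Q × Q) :
    m2E hM p = ((p.1 * p.2)⁻¹, p.1) := by
  show (HcE hM 1) ((TcE hM 1) p) = _
  rw [TcE_one_apply, HcE_one_apply]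
  rw [← minv_rev hM p.1 p.2, inv_inv hM]

theorem s0_sq (hM : IsMoufang Q) : HcE hM 1 * HcE hM 1 = 1 := by
  have h := HcE_inv hM (1 : Q)
  rw [← h]
  exact inv_mul_cancel _

theorem s1_sq (hM : IsMoufang Q) : VcE hM 1 * VcE hM 1 = 1 := by
  have h := VcE_inv hM (1 : Q)
  rw [← h]
  exact inv_mul_cancel _

theorem s2_sq (hM : IsMoufang Q) : TcE hM 1 * TcE hM 1 = 1 := by
  have h := TcE_inv hM (1 : Q)
  rw [← h]
  exact inv_mul_cancel _

theorem s1_mul_s0 (hM : IsMoufang Q) : VcE hM 1 * HcE hM 1 = m2E hM := by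
  apply Equiv.ext; rintro ⟨x, y⟩
  show (VcE hM 1) ((HcE hM 1) (x, y)) = m2E hM (x, y)
  rw [HcE_one_apply, VcE_one_apply, m2E_apply]
  simp only
  rw [rip2 hM x y]

theorem s1_mul_s2 (hM : IsMoufang Q) : VcE hM 1 * TcE hM 1 = m1E hM := by
  apply Equiv.ext; rintro ⟨x, y⟩
  show (VcE hM 1) ((TcE hM 1) (x, y)) = m1E hM (x, y)
  rw [TcE_one_apply, VcE_one_apply, m1E_apply]
  simp only
  rw [inv_inv hM, ← minv_rev hM x y]

theorem s1_mul_m1 (hM : IsMoufang Q) : VcE hM 1 * m1E hM = TcE hM 1 := by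
  apply Equiv.ext; rintro ⟨x, y⟩
  show (VcE hM 1) (m1E hM (x, y)) = (TcE hM 1) (x, y)
  rw [m1E_apply, VcE_one_apply, TcE_one_apply]
  simp only
  rw [minv_rev hM x y, lip1 hM y x⁻¹]

theorem s1_mul_m2 (hM : IsMoufang Q) : VcE hM 1 * m2E hM = HcE hM 1 := by
  apply Equiv.ext; rintro ⟨x, y⟩
  show (VcE hM 1) (m2E hM (x, y)) = (HcE hM 1) (x, y)
  rw [m2E_apply, VcE_one_apply, HcE_one_apply]
  simp only
  rw [inv_inv hM, minv_rev hM x y, rip1 hM y⁻¹ x]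

theorem s2_mul_s0 (hM : IsMoufang Q) : TcE hM 1 * HcE hM 1 = m1E hM := by
  apply Equiv.ext; rintro ⟨x, y⟩
  show (TcE hM 1) ((HcE hM 1) (x, y)) = m1E hM (x, y)
  rw [HcE_one_apply, TcE_one_apply, m1E_apply]
  simp only
  rw [inv_inv hM]

theorem s2_mul_s1 (hM : IsMoufang Q) : TcE hM 1 * VcE hM 1 = m2E hM := by
  apply Equiv.ext; rintro ⟨x, y⟩
  show (TcE hM 1) ((VcE hM 1) (x, y)) = m2E hM (x, y)
  rw [VcE_one_apply, TcE_one_apply, m2E_apply]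
  simp only
  rw [inv_inv hM]

theorem s2_mul_m1 (hM : IsMoufang Q) : TcE hM 1 * m1E hM = HcE hM 1 := by
  apply Equiv.ext; rintro ⟨x, y⟩
  show (TcE hM 1) (m1E hM (x, y)) = (HcE hM 1) (x, y)
  rw [m1E_apply, TcE_one_apply, HcE_one_apply]
  simp only
  rw [inv_inv hM]

theorem s2_mul_m2 (hM : IsMoufang Q) : TcE hM 1 * m2E hM = VcE hM 1 := by
  apply Equiv.ext; rintro ⟨x, y⟩
  show (TcE hM 1) (m2E hM (x, y)) = (VcE hM 1) (x, y)
  rw [m2E_apply, TcE_one_apply, VcE_one_apply]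
  simp only
  rw [inv_inv hM]

theorem m1_inv (hM : IsMoufang Q) : (m1E hM)⁻¹ = m2E hM := by
  show (HcE hM 1 * VcE hM 1)⁻¹ = m2E hM
  rw [_root_.mul_inv_rev, HcE_inv, VcE_inv]
  exact s1_mul_s0 hM

theorem m2_inv (hM : IsMoufang Q) : (m2E hM)⁻¹ = m1E hM := by
  show (HcE hM 1 * TcE hM 1)⁻¹ = m1E hM
  rw [_root_.mul_inv_rev, HcE_inv, TcE_inv]
  exact s2_mul_s0 hM

/-! Conjugation identities moving the translations around. -/

theorem s1_eta_s1 (hM : IsMoufang Q) (c : Q) :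
    VcE hM 1 * etaE hM c * VcE hM 1 = tauE hM c := by
  apply Equiv.ext; rintro ⟨x, y⟩
  show (VcE hM 1) ((etaE hM c) ((VcE hM 1) (x, y))) = (tauE hM c) (x, y)
  rw [VcE_one_apply, etaE_apply, VcE_one_apply, tauE_apply]
  simp only
  rw [minv_rev hM x⁻¹ c, inv_inv hM, eta_prod hM c x⁻¹ (x * y), lip2 hM x y]

theorem s2_eta_s2 (hM : IsMoufang Q) (c : Q) :
    TcE hM 1 * etaE hM c * TcE hM 1 = etapE hM c⁻¹ := by
  apply Equiv.ext; rintro ⟨x, y⟩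
  show (TcE hM 1) ((etaE hM c) ((TcE hM 1) (x, y))) = (etapE hM c⁻¹) (x, y)
  rw [TcE_one_apply, etaE_apply, TcE_one_apply, etapE_apply]
  simp only
  rw [inv_inv hM c, minv_rev hM (c⁻¹ * x⁻¹) c⁻¹, minv_rev hM c⁻¹ x⁻¹,
    inv_inv hM x, inv_inv hM c, minv_rev hM y⁻¹ c, inv_inv hM y, flexi hM c x]

/-! The basic reflections are not direction preserving (for nontrivial `Q`). -/

theorem s0_not_dirPres (hM : IsMoufang Q) {a0 : Q} (ha0 : a0 ≠ 1) :
    HcE hM 1 ∉ (loopNet Q).dirPres := by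
  intro h
  obtain ⟨e, he⟩ := (h 1 (vline 1) ⟨1, rfl⟩).1
  rw [Hc_img_v hM 1 1] at he
  exact tline_ne_vline ha0 he

theorem s1_not_dirPres (hM : IsMoufang Q) {a0 : Q} (ha0 : a0 ≠ 1) :
    VcE hM 1 ∉ (loopNet Q).dirPres := by
  intro h
  obtain ⟨e, he⟩ := (h 0 (hline 1) ⟨1, rfl⟩).1
  rw [Vc_img_h hM 1 1] at he
  exact tline_ne_hline ha0 he

theorem s2_not_dirPres (hM : IsMoufang Q) {a0 : Q} (ha0 : a0 ≠ 1) :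
    TcE hM 1 ∉ (loopNet Q).dirPres := by
  intro h
  obtain ⟨e, he⟩ := (h 0 (hline 1) ⟨1, rfl⟩).1
  rw [Tc_img_h hM 1 1] at he
  exact vline_ne_hline ha0 he

theorem m1_not_dirPres (hM : IsMoufang Q) {a0 : Q} (ha0 : a0 ≠ 1) :
    m1E hM ∉ (loopNet Q).dirPres := by
  intro h
  obtain ⟨e, he⟩ := (h 1 (vline 1) ⟨1, rfl⟩).1
  have himg : ⇑(m1E hM) '' vline 1 = ⇑(HcE hM 1) '' (⇑(VcE hM 1) '' vline 1) := by
    rw [← Set.image_comp]; rfl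
  rw [himg, Vc_img_v hM 1 1, Hc_img_v hM 1] at he
  exact tline_ne_vline ha0 he

theorem m2_not_dirPres (hM : IsMoufang Q) {a0 : Q} (ha0 : a0 ≠ 1) :
    m2E hM ∉ (loopNet Q).dirPres := by
  intro h
  obtain ⟨e, he⟩ := (h 0 (hline 1) ⟨1, rfl⟩).1
  have himg : ⇑(m2E hM) '' hline 1 = ⇑(HcE hM 1) '' (⇑(TcE hM 1) '' hline 1) := by
    rw [← Set.image_comp]; rfl
  rw [himg, Tc_img_h hM 1 1, Hc_img_v hM 1] at he
  exact tline_ne_hline ha0 he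

end MoufangProof
namespace MoufangProof
open Loop

set_option linter.unusedSectionVars false

variable {Q : Type*} [Loop Q]

/-- Permutations of `Q` arising as first components of elements of `M₀`. -/
noncomputable def alphaReach (Q : Type*) [Loop Q] : Subgroup (Equiv.Perm Q) where
  carrier := {φ | ∃ g ∈ (loopNet Q).MZero, ∀ p : Q × Q, (g p).1 = φ p.1}
  one_mem' := ⟨1, one_mem _, fun _ => rfl⟩
  mul_mem' := by
    rintro φ ψ ⟨g, hg, hgp⟩ ⟨h, hh, hhp⟩
    refine ⟨g * h, mul_mem hg hh, fun p => ?_⟩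
    rw [Equiv.Perm.mul_apply, hgp (h p), hhp p]
    rfl
  inv_mem' := by
    rintro φ ⟨g, hg, hgp⟩
    refine ⟨g⁻¹, inv_mem hg, fun p => ?_⟩
    have h := hgp (g⁻¹ p)
    rw [Equiv.Perm.apply_inv_self] at h
    rw [h, Equiv.Perm.inv_apply_self]

/-- Permutations of `Q` arising as second components of elements of `M₀`. -/
noncomputable def betaReach (Q : Type*) [Loop Q] : Subgroup (Equiv.Perm Q) where
  carrier := {φ | ∃ g ∈ (loopNet Q).MZero, ∀ p : Q × Q, (g p).2 = φ p.2}
  one_mem' := ⟨1, one_mem _, fun _ => rfl⟩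
  mul_mem' := by
    rintro φ ψ ⟨g, hg, hgp⟩ ⟨h, hh, hhp⟩
    refine ⟨g * h, mul_mem hg hh, fun p => ?_⟩
    rw [Equiv.Perm.mul_apply, hgp (h p), hhp p]
    rfl
  inv_mem' := by
    rintro φ ⟨g, hg, hgp⟩
    refine ⟨g⁻¹, inv_mem hg, fun p => ?_⟩
    have h := hgp (g⁻¹ p)
    rw [Equiv.Perm.apply_inv_self] at h
    rw [h, Equiv.Perm.inv_apply_self]

theorem Mlt_le_alphaReach (hM : IsMoufang Q) : Mlt Q ≤ alphaReach Q := by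
  rw [Mlt, Subgroup.closure_le]
  rintro φ (⟨a, rfl⟩ | ⟨a, rfl⟩)
  · refine ⟨tauE hM a⁻¹, tau_mem_MZero hM a⁻¹, fun p => ?_⟩
    show a⁻¹⁻¹ * p.1 = Loop.L a p.1
    rw [inv_inv hM, Loop.L_apply]
  · refine ⟨etaE hM a, eta_mem_MZero hM a, fun p => ?_⟩
    show p.1 * a = Loop.R a p.1
    rw [Loop.R_apply]

theorem Mlt_le_betaReach (hM : IsMoufang Q) : Mlt Q ≤ betaReach Q := by
  rw [Mlt, Subgroup.closure_le]
  rintro φ (⟨a, rfl⟩ | ⟨a, rfl⟩)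
  · refine ⟨etapE hM a, etap_mem_MZero hM a, fun p => ?_⟩
    show a * p.2 = Loop.L a p.2
    rw [Loop.L_apply]
  · refine ⟨tauE hM a⁻¹, tau_mem_MZero hM a⁻¹, fun p => ?_⟩
    show p.2 * a⁻¹⁻¹ = Loop.R a p.2
    rw [inv_inv hM, Loop.R_apply]

/-- The orbit of the identity under the first components of `K` is a normal
subloop. -/
theorem orbit_normal_subloop (hM : IsMoufang Q) (K : Subgroup (Equiv.Perm (Q × Q)))
    (hK1 : K ≤ (loopNet Q).MZero)
    (hK2 : ∀ g ∈ (loopNet Q).MZero, ∀ k ∈ K, g⁻¹ * k * g ∈ K) :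
    Loop.IsNormalSubloop Q {a | ∃ k ∈ K, af k 1 = a} := by
  have hdp : ∀ k ∈ K, k ∈ (loopNet Q).dirPres :=
    fun k hk => (Subgroup.mem_inf.mp (hK1 hk)).2
  have hconj : ∀ φ ∈ Mlt Q, ∀ k ∈ K, ∃ k' ∈ K, ∀ x : Q, af k' x = φ (af k (φ⁻¹ x)) := by
    intro φ hφ k hk
    obtain ⟨g, hg, hgp⟩ := Mlt_le_alphaReach hM hφ
    refine ⟨g * k * g⁻¹, ?_, ?_⟩
    · have h := hK2 g⁻¹ (inv_mem hg) k hk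
      rwa [_root_.inv_inv] at h
    · intro x
      have e1 : ∀ p : Q × Q, (g⁻¹ p).1 = φ⁻¹ p.1 := by
        intro p
        have h := hgp (g⁻¹ p)
        rw [Equiv.Perm.apply_inv_self] at h
        rw [h, Equiv.Perm.inv_apply_self]
      show ((g * k * g⁻¹) (x, 1)).1 = _
      have h0 : (g * k * g⁻¹) (x, 1) = g (k (g⁻¹ (x, 1))) := rfl
      rw [h0, hgp, fst_eq_af (hdp k hk), e1]
  have hL : ∀ a : Q, Loop.L a ∈ Mlt Q :=
    fun a => Subgroup.subset_closure (Or.inl ⟨a, rfl⟩)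
  have hR : ∀ a : Q, Loop.R a ∈ Mlt Q :=
    fun a => Subgroup.subset_closure (Or.inr ⟨a, rfl⟩)
  have hLinv : ∀ a : Q, (Loop.L a)⁻¹ a = 1 := by
    intro a
    have h : (Loop.L a) 1 = a := by rw [Loop.L_apply, Loop.mul_one]
    apply (Loop.L a).injective
    rw [Equiv.Perm.apply_inv_self, h]
  have hRinv : ∀ a : Q, (Loop.R a)⁻¹ a = 1 := by
    intro a
    have h : (Loop.R a) 1 = a := by rw [Loop.R_apply, Loop.one_mul]
    apply (Loop.R a).injective
    rw [Equiv.Perm.apply_inv_self, h]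
  constructor
  · constructor
    · exact ⟨1, one_mem K, rfl⟩
    · rintro a ⟨k, hk, rfl⟩ b ⟨k', hk', rfl⟩
      obtain ⟨k'', hk'', hae⟩ := hconj _ (hL (af k 1)) k' hk'
      refine ⟨k'' * k, mul_mem hk'' hk, ?_⟩
      rw [af_mul (hdp k'' hk''), hae, hLinv, Loop.L_apply]
    · rintro x ⟨k, hk, rfl⟩ y ⟨k', hk', rfl⟩ z hz
      obtain ⟨k'', hk'', hae⟩ := hconj _ (inv_mem (hL (af k 1))) (k' * k⁻¹)
        (mul_mem hk' (inv_mem hk))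
      refine ⟨k'', hk'', ?_⟩
      rw [hae, _root_.inv_inv]
      have h1 : (Loop.L (af k 1)) 1 = af k 1 := by rw [Loop.L_apply, Loop.mul_one]
      rw [h1, af_mul (hdp k' hk'), af_inv_af (hdp k hk)]
      have h2 : (Loop.L (af k 1)) z = af k' 1 := by rw [Loop.L_apply, hz]
      rw [← h2, Equiv.Perm.inv_apply_self]
    · rintro x ⟨k, hk, rfl⟩ y ⟨k', hk', rfl⟩ z hz
      obtain ⟨k'', hk'', hae⟩ := hconj _ (inv_mem (hR (af k 1))) (k' * k⁻¹)
        (mul_mem hk' (inv_mem hk))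
      refine ⟨k'', hk'', ?_⟩
      rw [hae, _root_.inv_inv]
      have h1 : (Loop.R (af k 1)) 1 = af k 1 := by rw [Loop.R_apply, Loop.one_mul]
      rw [h1, af_mul (hdp k' hk'), af_inv_af (hdp k hk)]
      have h2 : (Loop.R (af k 1)) z = af k' 1 := by rw [Loop.R_apply, hz]
      rw [← h2, Equiv.Perm.inv_apply_self]
  · rintro φ ⟨hφM, hφ1⟩ a ⟨k, hk, rfl⟩
    obtain ⟨k'', hk'', hae⟩ := hconj φ hφM k hk
    refine ⟨k'', hk'', ?_⟩
    rw [hae]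
    have h1 : φ⁻¹ (1 : Q) = 1 := by
      conv_lhs => rw [← hφ1]
      exact Equiv.Perm.inv_apply_self _ _
    rw [h1]

/-- Elements fixing all first coordinates act by right translation by a
right-nucleus element. -/
theorem eset_nucleus (hM : IsMoufang Q) {e : Q} {g : Equiv.Perm (Q × Q)}
    (hg : g ∈ (loopNet Q).MZero) (hgp : ∀ p : Q × Q, g p = (p.1, p.2 * e)) :
    ∀ x y : Q, x * (y * e) = (x * y) * e := by
  have hdp := (Subgroup.mem_inf.mp hg).2
  have ha : ∀ x, af g x = x := by
    intro x
    show (g (x, 1)).1 = x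
    rw [hgp (x, 1)]
  have hb1 : bf g 1 = e := by
    show (g (1, 1)).2 = e
    rw [hgp (1, 1)]
    exact Loop.one_mul e
  intro x y
  have h := (af_id_struct hdp ha).2 x y
  rwa [hb1] at h

/-- The set of right-translation parameters realized inside a suitable subgroup
is a normal subloop. -/
theorem eset_normal_subloop (hM : IsMoufang Q) (J : Subgroup (Equiv.Perm (Q × Q)))
    (hJ1 : J ≤ (loopNet Q).MZero)
    (hJ2 : ∀ g ∈ (loopNet Q).MZero, ∀ k ∈ J, g⁻¹ * k * g ∈ J) :
    Loop.IsNormalSubloop Q {e | ∃ k ∈ J, ∀ p : Q × Q, k p = (p.1, p.2 * e)} := by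
  have hone : (1 : Q) ∈ {e | ∃ k ∈ J, ∀ p : Q × Q, k p = (p.1, p.2 * e)} := by
    refine ⟨1, one_mem J, fun p => ?_⟩
    rw [Loop.mul_one]
    rfl
  have hmul : ∀ x ∈ {e | ∃ k ∈ J, ∀ p : Q × Q, k p = (p.1, p.2 * e)},
      ∀ y ∈ {e | ∃ k ∈ J, ∀ p : Q × Q, k p = (p.1, p.2 * e)},
      x * y ∈ {e | ∃ k ∈ J, ∀ p : Q × Q, k p = (p.1, p.2 * e)} := by
    rintro e ⟨g, hg, hgp⟩ e' ⟨g', hg', hgp'⟩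
    refine ⟨g' * g, mul_mem hg' hg, fun p => ?_⟩
    rw [Equiv.Perm.mul_apply, hgp p, hgp' (p.1, p.2 * e)]
    have := eset_nucleus hM (hJ1 hg') hgp' p.2 e
    simp only
    rw [this]
  have hinv : ∀ x ∈ {e | ∃ k ∈ J, ∀ p : Q × Q, k p = (p.1, p.2 * e)},
      x⁻¹ ∈ {e | ∃ k ∈ J, ∀ p : Q × Q, k p = (p.1, p.2 * e)} := by
    rintro e ⟨g, hg, hgp⟩
    refine ⟨g⁻¹, inv_mem hg, fun p => ?_⟩
    apply g.injective
    rw [Equiv.Perm.apply_inv_self, hgp (p.1, p.2 * e⁻¹)]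
    simp only
    rw [rip1 hM p.2 e]
  constructor
  · refine ⟨hone, hmul, ?_, ?_⟩
    · rintro x hx y hy z hz
      have hz' : z = x⁻¹ * y := by
        rw [← hz, lip2 hM x z]
      rw [hz']
      exact hmul _ (hinv x hx) _ hy
    · rintro x hx y hy z hz
      have hz' : z = y * x⁻¹ := by
        rw [← hz, rip2 hM z x]
      rw [hz']
      exact hmul _ hy _ (hinv x hx)
  · rintro φ ⟨hφM, hφ1⟩ e ⟨g, hg, hgp⟩
    obtain ⟨g', hg', hgp'⟩ := Mlt_le_betaReach hM hφM
    have hgdp := (Subgroup.mem_inf.mp (hJ1 hg)).2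
    have hg'dp := (Subgroup.mem_inf.mp hg').2
    have hmem : g' * g * g'⁻¹ ∈ J := by
      have h := hJ2 g'⁻¹ (inv_mem hg') g hg
      rwa [_root_.inv_inv] at h
    have e2 : ∀ p : Q × Q, (g'⁻¹ p).2 = φ⁻¹ p.2 := by
      intro p
      have h := hgp' (g'⁻¹ p)
      rw [Equiv.Perm.apply_inv_self] at h
      rw [h, Equiv.Perm.inv_apply_self]
    have hpoint : ∀ p : Q × Q, (g' * g * g'⁻¹) p = (p.1, φ (φ⁻¹ p.2 * e)) := by
      intro p
      have h0 : (g' * g * g'⁻¹) p = g' (g (g'⁻¹ p)) := rfl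
      rw [h0, hgp (g'⁻¹ p)]
      refine Prod.ext ?_ ?_
      · show (g' ((g'⁻¹ p).1, (g'⁻¹ p).2 * e)).1 = p.1
        rw [fst_eq_af hg'dp]
        have : ((g'⁻¹ p).1, (g'⁻¹ p).2 * e).1 = (g'⁻¹ p).1 := rfl
        rw [this]
        have h1 : (g'⁻¹ p).1 = af g'⁻¹ p.1 := fst_eq_af (inv_mem hg'dp) p
        rw [h1, af_af_inv hg'dp]
      · show (g' ((g'⁻¹ p).1, (g'⁻¹ p).2 * e)).2 = φ (φ⁻¹ p.2 * e)
        rw [hgp' ((g'⁻¹ p).1, (g'⁻¹ p).2 * e)]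
        have : ((g'⁻¹ p).1, (g'⁻¹ p).2 * e).2 = (g'⁻¹ p).2 * e := rfl
        rw [this, e2 p]
    have h1 : φ⁻¹ (1 : Q) = 1 := by
      conv_lhs => rw [← hφ1]
      exact Equiv.Perm.inv_apply_self _ _
    have hdpH : g' * g * g'⁻¹ ∈ (loopNet Q).dirPres :=
      (Subgroup.mem_inf.mp (hJ1 hmem)).2
    have haH : ∀ x, af (g' * g * g'⁻¹) x = x := by
      intro x
      show ((g' * g * g'⁻¹) (x, 1)).1 = x
      rw [hpoint (x, 1)]
    have hstr := (af_id_struct hdpH haH).1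
    have hb1 : bf (g' * g * g'⁻¹) 1 = φ e := by
      show ((g' * g * g'⁻¹) (1, 1)).2 = φ e
      rw [hpoint (1, 1)]
      simp only
      rw [h1, Loop.one_mul]
    refine ⟨g' * g * g'⁻¹, hmem, fun p => ?_⟩
    rw [apply_eq_af_bf hdpH p, haH p.1, hstr p.2, hb1]

end MoufangProof
set_option maxHeartbeats 2000000 in
/-- If `Q` is a simple Moufang loop, then the `3`-net `N` associated with `Q` is
simple; that is, the group with triality `(M₀, S)` determined by `N` — where `M₀` is
the direction preserving part of the group generated by all Bol reflections of `N` and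
`S` is generated by the Bol reflections `σ 0, σ 1, σ 2` with axes through the origin —
is `S`-simple. -/
theorem simple_moufang_loop_gives_ssimple_triality (Q : Type*) [Loop Q]
    (hMouf : IsMoufang Q) (hSimp : Loop.IsSimpleLoop Q)
    (σ : Fin 3 → Equiv.Perm (Q × Q))
    (hσ : ∀ i, (Loop.loopNet Q).BolSpec i (Loop.originLine Q i) (σ i) ∧
      (Loop.loopNet Q).IsColl (σ i)) :
    ∀ K : Subgroup (Equiv.Perm (Q × Q)), K ≤ (Loop.loopNet Q).MZero →
      (∀ g ∈ (Loop.loopNet Q).MZero, ∀ k ∈ K, g⁻¹ * k * g ∈ K) →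
      (∀ s ∈ Subgroup.closure (Set.range σ), ∀ k ∈ K, s⁻¹ * k * s ∈ K) →
      K = ⊥ ∨ K = (Loop.loopNet Q).MZero := by
  classical
  open Loop MoufangProof in
  intro K hK1 hK2 hK3
  by_cases hQtriv : ∀ a : Q, a = 1
  · left
    have hsub : ∀ p q : Q × Q, p = q := fun p q =>
      Prod.ext ((hQtriv p.1).trans (hQtriv q.1).symm) ((hQtriv p.2).trans (hQtriv q.2).symm)
    refine (Subgroup.eq_bot_iff_forall K).mpr fun k _ => Equiv.ext fun p => hsub _ _
  push_neg at hQtriv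
  obtain ⟨a0, ha0⟩ := hQtriv
  -- identify the three given reflections
  have hs0 : σ 0 = HcE hMouf 1 := by
    apply Equiv.ext
    intro p
    exact bolSpec_det0 hMouf ((hσ 0).1 : (loopNet Q).BolSpec 0 (hline 1) (σ 0)) p
  have hs1 : σ 1 = VcE hMouf 1 := by
    apply Equiv.ext
    intro p
    exact bolSpec_det1 hMouf ((hσ 1).1 : (loopNet Q).BolSpec 1 (vline 1) (σ 1)) p
  have hs2 : σ 2 = TcE hMouf 1 := by
    apply Equiv.ext
    intro p
    exact bolSpec_det2 hMouf ((hσ 2).1 : (loopNet Q).BolSpec 2 (tline 1) (σ 2)) p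
  -- conjugation stability of K under the basic reflections
  have hKs0 : ∀ k ∈ K, HcE hMouf 1 * k * HcE hMouf 1 ∈ K := by
    intro k hk
    have h := hK3 (σ 0) (Subgroup.subset_closure ⟨0, rfl⟩) k hk
    rwa [hs0, HcE_inv] at h
  have hKs1 : ∀ k ∈ K, VcE hMouf 1 * k * VcE hMouf 1 ∈ K := by
    intro k hk
    have h := hK3 (σ 1) (Subgroup.subset_closure ⟨1, rfl⟩) k hk
    rwa [hs1, VcE_inv] at h
  have hKs2 : ∀ k ∈ K, TcE hMouf 1 * k * TcE hMouf 1 ∈ K := by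
    intro k hk
    have h := hK3 (σ 2) (Subgroup.subset_closure ⟨2, rfl⟩) k hk
    rwa [hs2, TcE_inv] at h
  have hdp : ∀ k ∈ K, k ∈ (loopNet Q).dirPres :=
    fun k hk => (Subgroup.mem_inf.mp (hK1 hk)).2
  -- the orbit normal subloop
  rcases hSimp _ (orbit_normal_subloop hMouf K hK1 hK2) with hA1 | hAQ
  · -- the orbit is trivial : K = ⊥
    left
    have haf1 : ∀ k ∈ K, af k 1 = 1 := by
      intro k hk
      have h : af k 1 ∈ {a | ∃ k ∈ K, af k 1 = a} := ⟨k, hk, rfl⟩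
      rw [hA1] at h
      exact h
    have hbf1 : ∀ k ∈ K, bf k 1 = 1 := by
      intro k hk
      have h := haf1 _ (hKs2 k hk)
      have he : af (TcE hMouf 1 * k * TcE hMouf 1) 1 = (bf k 1)⁻¹ := by
        show ((TcE hMouf 1 * k * TcE hMouf 1) ((1 : Q), (1 : Q))).1 = _
        rw [conj_s2_apply hMouf (hdp k hk) 1 1, inv_one']
      rw [he] at h
      rw [← inv_inv hMouf (bf k 1), h, inv_one']
    have hafid : ∀ k ∈ K, ∀ c : Q, af k c = c := by
      intro k hk c
      have hmem := hK2 (etaE hMouf c) (eta_mem_MZero hMouf c) k hk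
      have h := haf1 _ hmem
      have hηdp := eta_mem_dirPres hMouf c
      have hstep : af ((etaE hMouf c)⁻¹ * k * etaE hMouf c) 1
          = af (etaE hMouf c)⁻¹ (af k (af (etaE hMouf c) 1)) := by
        rw [af_mul (mul_mem (Subgroup.inv_mem _ hηdp) (hdp k hk)),
          af_mul (Subgroup.inv_mem _ hηdp)]
      rw [hstep] at h
      have h1 : af (etaE hMouf c) 1 = c := Loop.one_mul c
      rw [h1] at h
      have h2 : af (etaE hMouf c)⁻¹ (af k c) = af k c * c⁻¹ := rfl
      rw [h2] at h
      have h3 : c * c⁻¹ = 1 := mul_inv hMouf c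
      exact mul_right_cancel' (h.trans h3.symm)
    have hbfid : ∀ k ∈ K, ∀ c : Q, bf k c = c := by
      intro k hk c
      have hmem := hK2 (etapE hMouf c) (etap_mem_MZero hMouf c) k hk
      have h := hbf1 _ hmem
      have hηdp := etap_mem_dirPres hMouf c
      have hstep : bf ((etapE hMouf c)⁻¹ * k * etapE hMouf c) 1
          = bf (etapE hMouf c)⁻¹ (bf k (bf (etapE hMouf c) 1)) := by
        rw [bf_mul (mul_mem (Subgroup.inv_mem _ hηdp) (hdp k hk)),
          bf_mul (Subgroup.inv_mem _ hηdp)]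
      rw [hstep] at h
      have h1 : bf (etapE hMouf c) 1 = c := Loop.mul_one c
      rw [h1] at h
      have h2 : bf (etapE hMouf c)⁻¹ (bf k c) = c⁻¹ * bf k c := rfl
      rw [h2] at h
      have h3 : c⁻¹ * c = 1 := inv_mul c
      exact mul_left_cancel' (h.trans h3.symm)
    refine (Subgroup.eq_bot_iff_forall K).mpr fun k hk => Equiv.ext fun p => ?_
    rw [apply_eq_af_bf (hdp k hk) p, hafid k hk p.1, hbfid k hk p.2]
    rfl
  · -- the orbit is everything : K = M₀
    right
    have hA : ∀ a : Q, ∃ k ∈ K, af k 1 = a := by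
      intro a
      have h : a ∈ {a | ∃ k ∈ K, af k 1 = a} := by rw [hAQ]; trivial
      exact h
    have hB : ∀ b : Q, ∃ k ∈ K, bf k 1 = b := by
      intro b
      obtain ⟨k, hk, hkb⟩ := hA b⁻¹
      refine ⟨TcE hMouf 1 * k * TcE hMouf 1, hKs2 k hk, ?_⟩
      show ((TcE hMouf 1 * k * TcE hMouf 1) ((1 : Q), (1 : Q))).2 = b
      rw [conj_s2_apply hMouf (hdp k hk) 1 1, inv_one', hkb, inv_inv hMouf]
    -- right-translation elements of K
    have hw : ∀ b : Q, ∃ w ∈ K, ∀ x, af w x = x * b := by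
      intro b
      obtain ⟨k, hk, hkb⟩ := hB b
      have hk0K : HcE hMouf 1 * k * HcE hMouf 1 ∈ K := hKs0 k hk
      refine ⟨(HcE hMouf 1 * k * HcE hMouf 1) * k⁻¹, mul_mem hk0K (inv_mem hk), ?_⟩
      intro x
      have hk0af : ∀ t, af (HcE hMouf 1 * k * HcE hMouf 1) t = af k t * b := by
        intro t
        show ((HcE hMouf 1 * k * HcE hMouf 1) (t, (1 : Q))).1 = _
        rw [conj_s0_apply hMouf (hdp k hk) t 1, inv_one', Loop.mul_one, hkb]
      rw [af_mul (hdp _ hk0K), hk0af, af_af_inv (hdp k hk)]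
    -- the key step : all η_b lie in K
    have heta : ∀ b : Q, etaE hMouf b ∈ K := by
      have hMZconj : ∀ g ∈ (Loop.loopNet Q).MZero, ∀ k ∈ (Loop.loopNet Q).MZero,
          g⁻¹ * k * g ∈ (Loop.loopNet Q).MZero :=
        fun g hg k hk => mul_mem (mul_mem (inv_mem hg) hk) hg
      rcases hSimp _ (eset_normal_subloop hMouf ((Loop.loopNet Q).MZero) le_rfl hMZconj)
        with hB1 | hBQ
      · -- the global translation parameter set is trivial
        intro b
        obtain ⟨w, hwK, hwaf⟩ := hw b
        have hδMZ : (etaE hMouf b)⁻¹ * w ∈ (Loop.loopNet Q).MZero :=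
          mul_mem (inv_mem (eta_mem_MZero hMouf b)) (hK1 hwK)
        have hδdp := (Subgroup.mem_inf.mp hδMZ).2
        have hδaf : ∀ x, af ((etaE hMouf b)⁻¹ * w) x = x := by
          intro x
          rw [af_mul (Subgroup.inv_mem _ (eta_mem_dirPres hMouf b)), hwaf x]
          exact rip2 hMouf x b
        have hδpt : ∀ p : Q × Q,
            ((etaE hMouf b)⁻¹ * w) p = (p.1, p.2 * bf ((etaE hMouf b)⁻¹ * w) 1) :=
          fun p => by rw [apply_eq_af_bf hδdp p, hδaf p.1, (af_id_struct hδdp hδaf).1 p.2]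
        have hmemB : bf ((etaE hMouf b)⁻¹ * w) 1
            ∈ {e | ∃ g ∈ (Loop.loopNet Q).MZero, ∀ p : Q × Q, g p = (p.1, p.2 * e)} :=
          ⟨_, hδMZ, hδpt⟩
        rw [hB1] at hmemB
        have hδ1 : (etaE hMouf b)⁻¹ * w = 1 := by
          apply Equiv.ext
          intro p
          rw [hδpt p, hmemB, Loop.mul_one]
          rfl
        rw [inv_mul_eq_one.mp hδ1]
        exact hwK
      · -- the global translation parameter set is everything : associativity
        have hBall : ∀ e : Q, ∃ g ∈ (Loop.loopNet Q).MZero, ∀ p : Q × Q,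
            g p = (p.1, p.2 * e) := by
          intro e
          have h : e ∈ {e | ∃ g ∈ (Loop.loopNet Q).MZero, ∀ p : Q × Q,
              g p = (p.1, p.2 * e)} := by rw [hBQ]; trivial
          exact h
        have hassoc : ∀ x y e : Q, x * (y * e) = (x * y) * e := by
          intro x y e
          obtain ⟨g, hg, hgp⟩ := hBall e
          exact eset_nucleus hMouf hg hgp x y
        rcases hSimp _ (eset_normal_subloop hMouf K hK1 hK2) with hE1 | hEQ
        · -- the K-translation parameter set is trivial
          have hEid : ∀ c ∈ K, (∀ x, af c x = x) → c = 1 := by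
            intro c hc hcaf
            have hcdp := hdp c hc
            have hcpt : ∀ p : Q × Q, c p = (p.1, p.2 * bf c 1) :=
              fun p => by
                rw [apply_eq_af_bf hcdp p, hcaf p.1, (af_id_struct hcdp hcaf).1 p.2]
            have hcE : bf c 1 ∈ {e | ∃ k ∈ K, ∀ p : Q × Q, k p = (p.1, p.2 * e)} :=
              ⟨c, hc, hcpt⟩
            rw [hE1] at hcE
            apply Equiv.ext
            intro p
            rw [hcpt p, hcE, Loop.mul_one]
            rfl
          have hcomm : ∀ k ∈ K, ∀ e y : Q, bf k (y * e) = bf k y * e := by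
            intro k hk e y
            obtain ⟨g, hg, hgp⟩ := hBall e
            have hgf1 : ∀ p : Q × Q, (g p).1 = p.1 := fun p => by rw [hgp p]
            have hginvf1 : ∀ p : Q × Q, (g⁻¹ p).1 = p.1 := by
              intro p
              have h := hgf1 (g⁻¹ p)
              rw [Equiv.Perm.apply_inv_self] at h
              exact h.symm
            have hcK : k⁻¹ * (g⁻¹ * k * g) ∈ K := mul_mem (inv_mem hk) (hK2 g hg k hk)
            have hcaf : ∀ x, af (k⁻¹ * (g⁻¹ * k * g)) x = x := by
              intro x
              show ((k⁻¹ * (g⁻¹ * k * g)) (x, (1 : Q))).1 = x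
              have h0 : (k⁻¹ * (g⁻¹ * k * g)) (x, (1 : Q)) = k⁻¹ (g⁻¹ (k (g (x, 1)))) := rfl
              rw [h0, fst_eq_af (Subgroup.inv_mem _ (hdp k hk)), hginvf1,
                fst_eq_af (hdp k hk), hgf1]
              exact af_inv_af (hdp k hk) x
            have hc1 := hEid _ hcK hcaf
            have hkg : g⁻¹ * k * g = k := (inv_mul_eq_one.mp hc1).symm
            have hpt := congrArg (fun f : Equiv.Perm (Q × Q) => f ((1 : Q), y)) hkg
            have h0 : (g⁻¹ * k * g) ((1 : Q), y) = g⁻¹ (k (g ((1 : Q), y))) := rfl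
            rw [h0, hgp ((1 : Q), y)] at hpt
            have hpt2 := congrArg g hpt
            rw [Equiv.Perm.apply_inv_self] at hpt2
            rw [hgp (k ((1 : Q), y))] at hpt2
            have h2 := congrArg Prod.snd hpt2
            simp only at h2
            exact h2
          have hkL : ∀ k ∈ K, ∀ y : Q, bf k y = bf k 1 * y := by
            intro k hk y
            have h := hcomm k hk y 1
            rwa [Loop.one_mul] at h
          have hkR : ∀ k ∈ K, ∀ u : Q, af k u = u * af k 1 := by
            intro k hk u
            have hk2K := hKs2 k hk
            have hbf2 : ∀ y : Q, bf (TcE hMouf 1 * k * TcE hMouf 1) y = (af k y⁻¹)⁻¹ := by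
              intro y
              show ((TcE hMouf 1 * k * TcE hMouf 1) ((1 : Q), y)).2 = _
              rw [conj_s2_apply hMouf (hdp k hk) 1 y]
            have hl := hkL _ hk2K u⁻¹
            rw [hbf2 u⁻¹, hbf2 1, inv_one', inv_inv hMouf u] at hl
            have h2 : ((af k 1)⁻¹ * u⁻¹)⁻¹ = u * af k 1 := by
              rw [minv_rev hMouf, inv_inv hMouf, inv_inv hMouf]
            rw [← inv_inv hMouf (af k u), hl, h2]
          have hG2 : ∀ k ∈ K, (bf k 1)⁻¹ = af k 1 * bf k 1 := by
            intro k hk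
            have hk1K := hKs1 k hk
            have ht1 : af (VcE hMouf 1 * k * VcE hMouf 1) 1 = (af k 1)⁻¹ := by
              show ((VcE hMouf 1 * k * VcE hMouf 1) ((1 : Q), (1 : Q))).1 = _
              rw [conj_s1_apply hMouf (hdp k hk) 1 1, inv_one']
            have hs1v : bf (VcE hMouf 1 * k * VcE hMouf 1) 1 = af k 1 * bf k 1 := by
              show ((VcE hMouf 1 * k * VcE hMouf 1) ((1 : Q), (1 : Q))).2 = _
              rw [conj_s1_apply hMouf (hdp k hk) 1 1, inv_one', Loop.one_mul]
            have hko : (VcE hMouf 1 * k * VcE hMouf 1) * k = 1 := by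
              apply hEid _ (mul_mem hk1K hk)
              intro x
              rw [af_mul (hdp _ hk1K), hkR _ hk1K, ht1, hkR k hk x]
              exact rip2 hMouf x (af k 1)
            have hk1inv : VcE hMouf 1 * k * VcE hMouf 1 = k⁻¹ := mul_eq_one_iff_eq_inv.mp hko
            have hbkinv : bf k⁻¹ 1 = (bf k 1)⁻¹ := by
              have h := bf_inv_bf (hdp k hk) (bf k 1)⁻¹
              rw [hkL k hk (bf k 1)⁻¹, mul_inv hMouf] at h
              exact h
            rw [← hbkinv, ← hk1inv]
            exact hs1v
          have hst : ∀ k ∈ K, bf k 1 = af k 1 := by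
            intro k hk
            have hk0K := hKs0 k hk
            have ht0 : af (HcE hMouf 1 * k * HcE hMouf 1) 1 = af k 1 * bf k 1 := by
              show ((HcE hMouf 1 * k * HcE hMouf 1) ((1 : Q), (1 : Q))).1 = _
              rw [conj_s0_apply hMouf (hdp k hk) 1 1, inv_one', Loop.one_mul]
            have hs0v : bf (HcE hMouf 1 * k * HcE hMouf 1) 1 = (bf k 1)⁻¹ := by
              show ((HcE hMouf 1 * k * HcE hMouf 1) ((1 : Q), (1 : Q))).2 = _
              rw [conj_s0_apply hMouf (hdp k hk) 1 1, inv_one']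
            have h := hG2 _ hk0K
            rw [hs0v, ht0, inv_inv hMouf, rip2 hMouf (af k 1) (bf k 1)] at h
            exact h
          have hcomQ : ∀ a u : Q, a * u = u * a := by
            have hcent : ∀ t u : Q, (t * t) * u = u * (t * t) := by
              intro t u
              obtain ⟨k, hk, hkt⟩ := hA t
              have h2 := atop (hdp k hk) 1 u
              rw [Loop.one_mul, hkL k hk u, hkR k hk u, hst k hk, hkt] at h2
              rw [hassoc t t u, ← hassoc u t t] at h2
              exact h2
            intro a u
            have hinvsq : ∀ t : Q, t⁻¹ = t * t := by
              intro t
              obtain ⟨k, hk, hkt⟩ := hA t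
              have h := hG2 k hk
              rw [hst k hk, hkt] at h
              exact h
            have h := hcent a⁻¹ u
            have ha2 : a⁻¹ * a⁻¹ = a := by
              rw [← hinvsq a⁻¹, inv_inv hMouf]
            rw [ha2] at h
            exact h
          intro b
          obtain ⟨k, hk, hkt⟩ := hA b
          have hinvsq : b⁻¹ = b * b := by
            have h := hG2 k hk
            rw [hst k hk, hkt] at h
            exact h
          have hb2 : b⁻¹ * b⁻¹ = b := by
            have h2 := congrArg (fun t => t * b⁻¹) hinvsq
            rw [h2, ← hassoc b b b⁻¹, mul_inv hMouf b, Loop.mul_one]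
          have hkpt : ∀ p : Q × Q, k p = (p.1 * b, b * p.2) := by
            intro p
            rw [apply_eq_af_bf (hdp k hk) p, hkR k hk p.1, hkt, hkL k hk p.2, hst k hk, hkt]
          have hfin : etaE hMouf b = k := by
            apply Equiv.ext
            rintro ⟨x, y⟩
            rw [etaE_apply, hkpt (x, y)]
            refine Prod.ext rfl ?_
            show (b⁻¹ * y) * b⁻¹ = b * y
            rw [hcomQ b⁻¹ y, ← hassoc y b⁻¹ b⁻¹, hb2, hcomQ y b]
          rw [hfin]
          exact hk
        · -- the K-translation parameter set is everything
          intro b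
          obtain ⟨w, hwK, hwaf⟩ := hw b
          have hδMZ : (etaE hMouf b)⁻¹ * w ∈ (Loop.loopNet Q).MZero :=
            mul_mem (inv_mem (eta_mem_MZero hMouf b)) (hK1 hwK)
          have hδdp := (Subgroup.mem_inf.mp hδMZ).2
          have hδaf : ∀ x, af ((etaE hMouf b)⁻¹ * w) x = x := by
            intro x
            rw [af_mul (Subgroup.inv_mem _ (eta_mem_dirPres hMouf b)), hwaf x]
            exact rip2 hMouf x b
          have hδpt : ∀ p : Q × Q,
              ((etaE hMouf b)⁻¹ * w) p = (p.1, p.2 * bf ((etaE hMouf b)⁻¹ * w) 1) :=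
            fun p => by rw [apply_eq_af_bf hδdp p, hδaf p.1, (af_id_struct hδdp hδaf).1 p.2]
          have hmem : bf ((etaE hMouf b)⁻¹ * w) 1
              ∈ {e | ∃ k ∈ K, ∀ p : Q × Q, k p = (p.1, p.2 * e)} := by
            rw [hEQ]; trivial
          obtain ⟨k', hk', hk'p⟩ := hmem
          have hδk' : (etaE hMouf b)⁻¹ * w = k' :=
            Equiv.ext fun p => by rw [hδpt p, hk'p p]
          have hηw : etaE hMouf b = w * k'⁻¹ := by
            rw [← hδk']
            group
          rw [hηw]
          exact mul_mem hwK (inv_mem hk')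
    -- hence all the other translations
    have htau : ∀ c : Q, tauE hMouf c ∈ K := by
      intro c
      have h := hKs1 _ (heta c)
      rwa [s1_eta_s1 hMouf c] at h
    have hetap : ∀ c : Q, etapE hMouf c ∈ K := by
      intro c
      have h := hKs2 _ (heta c⁻¹)
      rwa [s2_eta_s2 hMouf c⁻¹, inv_inv hMouf] at h
    -- closure induction : every element of M factors as (element of K) ⬝ (basic word)
    have hcl0 : HcE hMouf 1 ∈ Subgroup.closure (Set.range σ) := by
      rw [← hs0]; exact Subgroup.subset_closure ⟨0, rfl⟩
    have hcl1 : VcE hMouf 1 ∈ Subgroup.closure (Set.range σ) := by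
      rw [← hs1]; exact Subgroup.subset_closure ⟨1, rfl⟩
    have hcl2 : TcE hMouf 1 ∈ Subgroup.closure (Set.range σ) := by
      rw [← hs2]; exact Subgroup.subset_closure ⟨2, rfl⟩
    set Hs : Set (Equiv.Perm (Q × Q)) :=
      {1, HcE hMouf 1, VcE hMouf 1, TcE hMouf 1, m1E hMouf, m2E hMouf} with hHs
    have hHsub : ∀ h ∈ Hs, h ∈ Subgroup.closure (Set.range σ) := by
      intro h hh
      simp only [hHs, Set.mem_insert_iff, Set.mem_singleton_iff] at hh
      rcases hh with rfl | rfl | rfl | rfl | rfl | rfl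
      · exact one_mem _
      · exact hcl0
      · exact hcl1
      · exact hcl2
      · exact mul_mem hcl0 hcl1
      · exact mul_mem hcl0 hcl2
    have e00 : HcE hMouf 1 * HcE hMouf 1 = 1 := s0_sq hMouf
    have e11 : VcE hMouf 1 * VcE hMouf 1 = 1 := s1_sq hMouf
    have e22 : TcE hMouf 1 * TcE hMouf 1 = 1 := s2_sq hMouf
    have e01 : HcE hMouf 1 * VcE hMouf 1 = m1E hMouf := rfl
    have e02 : HcE hMouf 1 * TcE hMouf 1 = m2E hMouf := rfl
    have e0m1 : HcE hMouf 1 * m1E hMouf = VcE hMouf 1 := by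
      rw [show m1E hMouf = HcE hMouf 1 * VcE hMouf 1 from rfl, ← mul_assoc, e00, _root_.one_mul]
    have e0m2 : HcE hMouf 1 * m2E hMouf = TcE hMouf 1 := by
      rw [show m2E hMouf = HcE hMouf 1 * TcE hMouf 1 from rfl, ← mul_assoc, e00, _root_.one_mul]
    have e10 : VcE hMouf 1 * HcE hMouf 1 = m2E hMouf := s1_mul_s0 hMouf
    have e12 : VcE hMouf 1 * TcE hMouf 1 = m1E hMouf := s1_mul_s2 hMouf
    have e1m1 : VcE hMouf 1 * m1E hMouf = TcE hMouf 1 := s1_mul_m1 hMouf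
    have e1m2 : VcE hMouf 1 * m2E hMouf = HcE hMouf 1 := s1_mul_m2 hMouf
    have e20 : TcE hMouf 1 * HcE hMouf 1 = m1E hMouf := s2_mul_s0 hMouf
    have e21 : TcE hMouf 1 * VcE hMouf 1 = m2E hMouf := s2_mul_s1 hMouf
    have e2m1 : TcE hMouf 1 * m1E hMouf = HcE hMouf 1 := s2_mul_m1 hMouf
    have e2m2 : TcE hMouf 1 * m2E hMouf = VcE hMouf 1 := s2_mul_m2 hMouf
    have em10 : m1E hMouf * HcE hMouf 1 = TcE hMouf 1 := by
      rw [show m1E hMouf = HcE hMouf 1 * VcE hMouf 1 from rfl, mul_assoc, e10, e0m2]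
    have em11 : m1E hMouf * VcE hMouf 1 = HcE hMouf 1 := by
      rw [show m1E hMouf = HcE hMouf 1 * VcE hMouf 1 from rfl, mul_assoc, e11, _root_.mul_one]
    have em12 : m1E hMouf * TcE hMouf 1 = VcE hMouf 1 := by
      rw [show m1E hMouf = HcE hMouf 1 * VcE hMouf 1 from rfl, mul_assoc, e12, e0m1]
    have em1m1 : m1E hMouf * m1E hMouf = m2E hMouf := by
      nth_rewrite 1 [show m1E hMouf = HcE hMouf 1 * VcE hMouf 1 from rfl]
      rw [mul_assoc, e1m1, e02]
    have em1m2 : m1E hMouf * m2E hMouf = 1 := by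
      rw [show m1E hMouf = HcE hMouf 1 * VcE hMouf 1 from rfl, mul_assoc, e1m2, e00]
    have em20 : m2E hMouf * HcE hMouf 1 = VcE hMouf 1 := by
      rw [show m2E hMouf = HcE hMouf 1 * TcE hMouf 1 from rfl, mul_assoc, e20, e0m1]
    have em21 : m2E hMouf * VcE hMouf 1 = TcE hMouf 1 := by
      rw [show m2E hMouf = HcE hMouf 1 * TcE hMouf 1 from rfl, mul_assoc, e21, e0m2]
    have em22 : m2E hMouf * TcE hMouf 1 = HcE hMouf 1 := by
      rw [show m2E hMouf = HcE hMouf 1 * TcE hMouf 1 from rfl, mul_assoc, e22, _root_.mul_one]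
    have em2m1 : m2E hMouf * m1E hMouf = 1 := by
      rw [show m2E hMouf = HcE hMouf 1 * TcE hMouf 1 from rfl, mul_assoc, e2m1, e00]
    have em2m2 : m2E hMouf * m2E hMouf = m1E hMouf := by
      nth_rewrite 1 [show m2E hMouf = HcE hMouf 1 * TcE hMouf 1 from rfl]
      rw [mul_assoc, e2m2, e01]
    have hmulmem : ∀ x ∈ Hs, ∀ y ∈ Hs, x * y ∈ Hs := by
      intro x hx y hy
      simp only [hHs, Set.mem_insert_iff, Set.mem_singleton_iff] at hx hy ⊢
      rcases hx with rfl | rfl | rfl | rfl | rfl | rfl <;>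
        rcases hy with rfl | rfl | rfl | rfl | rfl | rfl <;>
        simp only [_root_.one_mul, _root_.mul_one, e00, e11, e22, e01, e02, e0m1, e0m2, e10, e12,
          e1m1, e1m2, e20, e21, e2m1, e2m2, em10, em11, em12, em1m1, em1m2, em20,
          em21, em22, em2m1, em2m2] <;>
        tauto
    have hinvmem : ∀ x ∈ Hs, x⁻¹ ∈ Hs := by
      intro x hx
      simp only [hHs, Set.mem_insert_iff, Set.mem_singleton_iff] at hx ⊢
      rcases hx with rfl | rfl | rfl | rfl | rfl | rfl
      · rw [inv_one]; tauto
      · rw [HcE_inv]; tauto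
      · rw [VcE_inv]; tauto
      · rw [TcE_inv]; tauto
      · rw [m1_inv hMouf]; tauto
      · rw [m2_inv hMouf]; tauto
    have hKH : ∀ g ∈ (Loop.loopNet Q).MGroup, ∃ k ∈ K, ∃ h ∈ Hs, g = k * h := by
      intro g hg
      refine Subgroup.closure_induction ?_ ?_ ?_ ?_ hg
      · rintro f ⟨ℓ, hf⟩
        rcases bolRefl_eq hMouf hf with ⟨c, rfl⟩ | ⟨c, rfl⟩ | ⟨c, rfl⟩
        · refine ⟨(etaE hMouf c)⁻¹, inv_mem (heta c), HcE hMouf 1, by simp [hHs], ?_⟩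
          rw [etaE_eq hMouf c, _root_.mul_inv_rev, HcE_inv, HcE_inv, mul_assoc,
            s0_sq hMouf, _root_.mul_one]
        · refine ⟨(etapE hMouf c)⁻¹, inv_mem (hetap c), VcE hMouf 1, by simp [hHs], ?_⟩
          rw [etapE_eq hMouf c, _root_.mul_inv_rev, VcE_inv, VcE_inv, mul_assoc,
            s1_sq hMouf, _root_.mul_one]
        · refine ⟨(tauE hMouf c)⁻¹, inv_mem (htau c), TcE hMouf 1, by simp [hHs], ?_⟩
          rw [tauE_eq hMouf c, _root_.mul_inv_rev, TcE_inv, TcE_inv, mul_assoc,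
            s2_sq hMouf, _root_.mul_one]
      · exact ⟨1, one_mem K, 1, by simp [hHs], (_root_.mul_one 1).symm⟩
      · rintro x y hxmem hymem ⟨k, hk, h, hh, rfl⟩ ⟨k', hk', h', hh', rfl⟩
        refine ⟨k * (h * k' * h⁻¹), ?_, h * h', hmulmem h hh h' hh', ?_⟩
        · refine mul_mem hk ?_
          have hs := hK3 h⁻¹ (inv_mem (hHsub h hh)) k' hk'
          rwa [_root_.inv_inv] at hs
        · group
      · rintro x hxmem ⟨k, hk, h, hh, rfl⟩
        refine ⟨h⁻¹ * k⁻¹ * h, hK3 h (hHsub h hh) k⁻¹ (inv_mem hk), h⁻¹, hinvmem h hh, ?_⟩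
        group
    apply le_antisymm hK1
    intro g hg
    obtain ⟨hgM, hgD⟩ := Subgroup.mem_inf.mp hg
    obtain ⟨k, hk, h, hh, rfl⟩ := hKH _ hgM
    have hhD : h ∈ (Loop.loopNet Q).dirPres := by
      have h2 : h = k⁻¹ * (k * h) := by group
      rw [h2]
      exact mul_mem (inv_mem (hdp k hk)) hgD
    simp only [hHs, Set.mem_insert_iff, Set.mem_singleton_iff] at hh
    rcases hh with rfl | rfl | rfl | rfl | rfl | rfl
    · rw [_root_.mul_one]; exact hk
    · exact absurd hhD (s0_not_dirPres hMouf ha0)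
    · exact absurd hhD (s1_not_dirPres hMouf ha0)
    · exact absurd hhD (s2_not_dirPres hMouf ha0)
    · exact absurd hhD (m1_not_dirPres hMouf ha0)
    · exact absurd hhD (m2_not_dirPres hMouf ha0)
end

section
/- Let L be a Moufang loop with associated 3-net N, and let G be the group of direction preserving collineations of N with triality group S = ⟨σ, ρ⟩ generated by the Bol reflections through the origin, where ρ permutes the three directions cyclically. If ρ is an inner automorphism of G (i.e., the automorphism of G induced by conjugation by ρ coincides with conjugation by some element of G), then L has exponent 3, i.e., a^3 = e for every a ∈ L. -/
open Matrix
namespace MAux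
open Loop ThreeNet

variable {Q : Type*} [Loop Q]

theorem fin3 : ∀ i : Fin 3, i = 0 ∨ i = 1 ∨ i = 2 := by decide

noncomputable def minv (a : Q) : Q := (Loop.existsUnique_ldiv a 1).exists.choose

theorem mul_minv (a : Q) : a * minv a = 1 := (Loop.existsUnique_ldiv a 1).exists.choose_spec

theorem lip (hM : IsMoufang Q) (a z : Q) : minv a * (a * z) = z := by
  have h := hM a (minv a) z
  rw [mul_minv, Loop.one_mul] at h
  exact (Loop.mul_left_cancel' h).symm

theorem lip2 (hM : IsMoufang Q) (a z : Q) : a * (minv a * z) = z :=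
  Loop.mul_left_cancel' (a := minv a) (by rw [lip hM])

theorem minv_mul (hM : IsMoufang Q) (a : Q) : minv a * a = 1 :=
  Loop.mul_left_cancel' (a := a) (by rw [lip2 hM, Loop.mul_one])

theorem minv_minv (hM : IsMoufang Q) (a : Q) : minv (minv a) = a :=
  (Loop.mul_left_cancel' (a := minv a) (by rw [mul_minv, minv_mul hM])).symm

theorem minv_one : minv (1 : Q) = 1 := by
  have h := mul_minv (1 : Q); rwa [Loop.one_mul] at h

theorem rip (hM : IsMoufang Q) (z a : Q) : (z * a) * minv a = z := by
  have h := hM a (minv a * z) (minv a)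
  rw [lip2 hM, mul_minv, Loop.mul_one] at h
  rw [h, lip2 hM]

theorem rip2 (hM : IsMoufang Q) (z a : Q) : (z * minv a) * a = z := by
  have h := rip hM z (minv a); rwa [minv_minv hM] at h

theorem flex (hM : IsMoufang Q) (a y : Q) : (a * y) * a = a * (y * a) := by
  have h := hM a y 1
  rwa [Loop.mul_one, Loop.mul_one] at h

theorem minv_rev (hM : IsMoufang Q) (x y : Q) : minv (x * y) = minv y * minv x := by
  have h2 : minv x * minv (minv y * minv x) = y := by
    have h := rip hM y (minv y * minv x)
    rwa [lip2 hM] at h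
  have h3 : x * y = minv (minv y * minv x) := by
    have h := lip2 hM x (minv (minv y * minv x))
    rwa [h2] at h
  rw [h3, minv_minv hM]

theorem rmouf (hM : IsMoufang Q) (w x y : Q) : ((w * x) * y) * x = w * (x * (y * x)) := by
  have inj : ∀ a b : Q, minv a = minv b → a = b := fun a b h => by
    have h2 := congrArg minv h; rwa [minv_minv hM, minv_minv hM] at h2
  apply inj
  simp only [minv_rev hM]
  exact (hM (minv x) (minv y) (minv w)).symm

theorem lmouf (hM : IsMoufang Q) (m x z : Q) : (m * (x * m)) * (minv m * z) = m * (x * z) := by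
  have h := hM m x (minv m * z)
  rwa [lip2 hM, flex hM] at h

theorem rc (hM : IsMoufang Q) (u m x : Q) : (u * minv m) * ((m * x) * m) = (u * x) * m := by
  have h := rmouf hM (u * minv m) m x
  rw [rip2 hM, ← flex hM] at h
  exact h.symm

theorem invconj (hM : IsMoufang Q) (m x : Q) :
    minv (m * (minv x * m)) = (minv m * x) * minv m := by
  rw [minv_rev hM, minv_rev hM, minv_minv hM]

theorem invconj2 (hM : IsMoufang Q) (m x : Q) :
    minv ((m * minv x) * m) = minv m * (x * minv m) := by
  rw [minv_rev hM, minv_rev hM, minv_minv hM]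

theorem mul_minv_mul (hM : IsMoufang Q) (a t : Q) : t * minv (a * t) = minv a := by
  rw [minv_rev hM]; exact lip2 hM t (minv a)

end MAux
namespace MAux
open Loop ThreeNet

variable {Q : Type*} [Loop Q]

theorem net_lines0 : (Loop.loopNet Q).lines 0 = {s | ∃ c : Q, s = Loop.hline c} := rfl
theorem net_lines1 : (Loop.loopNet Q).lines 1 = {s | ∃ c : Q, s = Loop.vline c} := rfl
theorem net_lines2 : (Loop.loopNet Q).lines 2 = {s | ∃ c : Q, s = Loop.tline c} := rfl

/-- The candidate Bol reflection with vertical axis `X = m`. -/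
noncomputable def vref (m : Q) : Q × Q → Q × Q :=
  fun p => (m * (minv p.1 * m), minv m * (p.1 * p.2))

/-- The candidate Bol reflection with horizontal axis `Y = m`. -/
noncomputable def href (m : Q) : Q × Q → Q × Q :=
  fun p => ((p.1 * p.2) * minv m, (m * minv p.2) * m)

theorem vref_prod (hM : IsMoufang Q) (m : Q) (p : Q × Q) :
    (vref m p).1 * (vref m p).2 = m * p.2 := by
  show (m * (minv p.1 * m)) * (minv m * (p.1 * p.2)) = m * p.2
  rw [lmouf hM, lip hM]

theorem href_prod (hM : IsMoufang Q) (m : Q) (p : Q × Q) :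
    (href m p).1 * (href m p).2 = p.1 * m := by
  show ((p.1 * p.2) * minv m) * ((m * minv p.2) * m) = p.1 * m
  rw [rc hM, rip hM]

theorem vref_vref (hM : IsMoufang Q) (m : Q) (p : Q × Q) : vref m (vref m p) = p := by
  apply Prod.ext
  · show m * (minv (m * (minv p.1 * m)) * m) = p.1
    rw [invconj hM, rip2 hM, lip2 hM]
  · show minv m * ((vref m p).1 * (vref m p).2) = p.2
    rw [vref_prod hM, lip hM]

theorem href_href (hM : IsMoufang Q) (m : Q) (p : Q × Q) : href m (href m p) = p := by
  apply Prod.ext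
  · show ((href m p).1 * (href m p).2) * minv m = p.1
    rw [href_prod hM, rip hM]
  · show (m * minv ((m * minv p.2) * m)) * m = p.2
    rw [invconj2 hM, lip2 hM, rip2 hM]

/-- The Bol reflection with vertical axis `X = m`, as a permutation. -/
noncomputable def vperm (hM : IsMoufang Q) (m : Q) : Equiv.Perm (Q × Q) :=
  ⟨vref m, vref m, vref_vref hM m, vref_vref hM m⟩

/-- The Bol reflection with horizontal axis `Y = m`, as a permutation. -/
noncomputable def hperm (hM : IsMoufang Q) (m : Q) : Equiv.Perm (Q × Q) :=
  ⟨href m, href m, href_href hM m, href_href hM m⟩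

theorem vperm_apply (hM : IsMoufang Q) (m : Q) (p : Q × Q) : vperm hM m p = vref m p := rfl
theorem hperm_apply (hM : IsMoufang Q) (m : Q) (p : Q × Q) : hperm hM m p = href m p := rfl

theorem vperm_inv (hM : IsMoufang Q) (m : Q) : (vperm hM m)⁻¹ = vperm hM m := rfl
theorem hperm_inv (hM : IsMoufang Q) (m : Q) : (hperm hM m)⁻¹ = hperm hM m := rfl

theorem imageEq {P : Type*} (e : Equiv.Perm P) {A B : Set P}
    (h1 : ∀ p ∈ A, e p ∈ B) (h2 : ∀ p ∈ B, ⇑e⁻¹ p ∈ A) : ⇑e '' A = B := by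
  ext b
  constructor
  · rintro ⟨a, ha, rfl⟩; exact h1 a ha
  · intro hb; exact ⟨⇑e⁻¹ b, h2 b hb, by simp⟩

end MAux
namespace MAux
open Loop ThreeNet

variable {Q : Type*} [Loop Q]

theorem vperm_image_hline (hM : IsMoufang Q) (m c : Q) :
    ⇑(vperm hM m) '' Loop.hline c = Loop.tline (m * c) := by
  apply imageEq
  · intro p hp
    show (vref m p).1 * (vref m p).2 = m * c
    rw [vref_prod hM, (hp : p.2 = c)]
  · intro p hp
    rw [vperm_inv hM]
    show minv m * (p.1 * p.2) = c
    rw [(hp : p.1 * p.2 = m * c), lip hM]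

theorem vperm_image_tline (hM : IsMoufang Q) (m c : Q) :
    ⇑(vperm hM m) '' Loop.tline c = Loop.hline (minv m * c) := by
  apply imageEq
  · intro p hp
    show minv m * (p.1 * p.2) = minv m * c
    rw [(hp : p.1 * p.2 = c)]
  · intro p hp
    rw [vperm_inv hM]
    show (vref m p).1 * (vref m p).2 = c
    rw [vref_prod hM, (hp : p.2 = minv m * c), lip2 hM]

theorem vperm_image_vline (hM : IsMoufang Q) (m c : Q) :
    ⇑(vperm hM m) '' Loop.vline c = Loop.vline (m * (minv c * m)) := by
  apply imageEq
  · intro p hp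
    show m * (minv p.1 * m) = m * (minv c * m)
    rw [(hp : p.1 = c)]
  · intro p hp
    rw [vperm_inv hM]
    show m * (minv p.1 * m) = c
    rw [(hp : p.1 = m * (minv c * m)), invconj hM, rip2 hM, lip2 hM]

theorem hperm_image_hline (hM : IsMoufang Q) (m c : Q) :
    ⇑(hperm hM m) '' Loop.hline c = Loop.hline ((m * minv c) * m) := by
  apply imageEq
  · intro p hp
    show (m * minv p.2) * m = (m * minv c) * m
    rw [(hp : p.2 = c)]
  · intro p hp
    rw [hperm_inv hM]
    show (m * minv p.2) * m = c
    rw [(hp : p.2 = (m * minv c) * m), invconj2 hM, lip2 hM, rip2 hM]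

theorem hperm_image_vline (hM : IsMoufang Q) (m c : Q) :
    ⇑(hperm hM m) '' Loop.vline c = Loop.tline (c * m) := by
  apply imageEq
  · intro p hp
    show (href m p).1 * (href m p).2 = c * m
    rw [href_prod hM, (hp : p.1 = c)]
  · intro p hp
    rw [hperm_inv hM]
    show (p.1 * p.2) * minv m = c
    rw [(hp : p.1 * p.2 = c * m), rip hM]

theorem hperm_image_tline (hM : IsMoufang Q) (m c : Q) :
    ⇑(hperm hM m) '' Loop.tline c = Loop.vline (c * minv m) := by
  apply imageEq
  · intro p hp
    show (p.1 * p.2) * minv m = c * minv m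
    rw [(hp : p.1 * p.2 = c)]
  · intro p hp
    rw [hperm_inv hM]
    show (href m p).1 * (href m p).2 = c
    rw [href_prod hM, (hp : p.1 = c * minv m), rip2 hM]

theorem vperm_isColl (hM : IsMoufang Q) (m : Q) :
    (Loop.loopNet Q).IsColl (vperm hM m) := by
  have fwd : ∀ ℓ, (Loop.loopNet Q).IsLine ℓ → (Loop.loopNet Q).IsLine (⇑(vperm hM m) '' ℓ) := by
    rintro ℓ ⟨i, hi⟩
    rcases fin3 i with rfl | rfl | rfl
    · rw [net_lines0] at hi; obtain ⟨c, rfl⟩ := hi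
      exact ⟨2, by rw [net_lines2]; exact ⟨m * c, vperm_image_hline hM m c⟩⟩
    · rw [net_lines1] at hi; obtain ⟨c, rfl⟩ := hi
      exact ⟨1, by rw [net_lines1]; exact ⟨m * (minv c * m), vperm_image_vline hM m c⟩⟩
    · rw [net_lines2] at hi; obtain ⟨c, rfl⟩ := hi
      exact ⟨0, by rw [net_lines0]; exact ⟨minv m * c, vperm_image_tline hM m c⟩⟩
  exact ⟨fwd, fun ℓ hℓ => by rw [vperm_inv hM]; exact fwd ℓ hℓ⟩

theorem hperm_isColl (hM : IsMoufang Q) (m : Q) :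
    (Loop.loopNet Q).IsColl (hperm hM m) := by
  have fwd : ∀ ℓ, (Loop.loopNet Q).IsLine ℓ → (Loop.loopNet Q).IsLine (⇑(hperm hM m) '' ℓ) := by
    rintro ℓ ⟨i, hi⟩
    rcases fin3 i with rfl | rfl | rfl
    · rw [net_lines0] at hi; obtain ⟨c, rfl⟩ := hi
      exact ⟨0, by rw [net_lines0]; exact ⟨(m * minv c) * m, hperm_image_hline hM m c⟩⟩
    · rw [net_lines1] at hi; obtain ⟨c, rfl⟩ := hi
      exact ⟨2, by rw [net_lines2]; exact ⟨c * m, hperm_image_vline hM m c⟩⟩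
    · rw [net_lines2] at hi; obtain ⟨c, rfl⟩ := hi
      exact ⟨1, by rw [net_lines1]; exact ⟨c * minv m, hperm_image_tline hM m c⟩⟩
  exact ⟨fwd, fun ℓ hℓ => by rw [hperm_inv hM]; exact fwd ℓ hℓ⟩

end MAux
namespace MAux
open Loop ThreeNet

variable {Q : Type*} [Loop Q]

theorem vperm_bolspec (hM : IsMoufang Q) (m : Q) :
    (Loop.loopNet Q).BolSpec 1 (Loop.vline m) (vperm hM m) := by
  intro j k hj hk hjk p aj haj ak hak hpaj hpak qj hqjaj hqjl qk hqkak hqkl bj hbj bk hbk hqkbj hqjbk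
  rcases fin3 j with rfl | rfl | rfl
  · rcases fin3 k with rfl | rfl | rfl
    · exact absurd rfl hjk
    · exact absurd rfl hk
    · -- j = 0 (horizontal), k = 2 (transversal)
      rw [net_lines0] at haj hbj
      rw [net_lines2] at hak hbk
      obtain ⟨ca, rfl⟩ := haj
      obtain ⟨ck, rfl⟩ := hak
      obtain ⟨db, rfl⟩ := hbj
      obtain ⟨dk, rfl⟩ := hbk
      constructor
      · show minv m * (p.1 * p.2) = db
        have hx : p.1 * p.2 = m * qk.2 := by
          rw [(hpak : p.1 * p.2 = ck), ← (hqkak : qk.1 * qk.2 = ck), (hqkl : qk.1 = m)]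
        rw [hx, lip hM, (hqkbj : qk.2 = db)]
      · show (vref m p).1 * (vref m p).2 = dk
        rw [vref_prod hM, (hpaj : p.2 = ca), ← (hqjbk : qj.1 * qj.2 = dk),
          (hqjl : qj.1 = m), (hqjaj : qj.2 = ca)]
  · exact absurd rfl hj
  · rcases fin3 k with rfl | rfl | rfl
    · -- j = 2 (transversal), k = 0 (horizontal)
      rw [net_lines2] at haj hbj
      rw [net_lines0] at hak hbk
      obtain ⟨ca, rfl⟩ := haj
      obtain ⟨ck, rfl⟩ := hak
      obtain ⟨db, rfl⟩ := hbj
      obtain ⟨dk, rfl⟩ := hbk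
      constructor
      · show (vref m p).1 * (vref m p).2 = db
        rw [vref_prod hM, (hpak : p.2 = ck), ← (hqkbj : qk.1 * qk.2 = db),
          (hqkl : qk.1 = m), (hqkak : qk.2 = ck)]
      · show minv m * (p.1 * p.2) = dk
        have hx : p.1 * p.2 = m * qj.2 := by
          rw [(hpaj : p.1 * p.2 = ca), ← (hqjaj : qj.1 * qj.2 = ca), (hqjl : qj.1 = m)]
        rw [hx, lip hM, (hqjbk : qj.2 = dk)]
    · exact absurd rfl hk
    · exact absurd rfl hjk

theorem hperm_bolspec (hM : IsMoufang Q) (m : Q) :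
    (Loop.loopNet Q).BolSpec 0 (Loop.hline m) (hperm hM m) := by
  intro j k hj hk hjk p aj haj ak hak hpaj hpak qj hqjaj hqjl qk hqkak hqkl bj hbj bk hbk hqkbj hqjbk
  rcases fin3 j with rfl | rfl | rfl
  · exact absurd rfl hj
  · rcases fin3 k with rfl | rfl | rfl
    · exact absurd rfl hk
    · exact absurd rfl hjk
    · -- j = 1 (vertical), k = 2 (transversal)
      rw [net_lines1] at haj hbj
      rw [net_lines2] at hak hbk
      obtain ⟨ca, rfl⟩ := haj
      obtain ⟨ck, rfl⟩ := hak
      obtain ⟨db, rfl⟩ := hbj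
      obtain ⟨dk, rfl⟩ := hbk
      constructor
      · show (p.1 * p.2) * minv m = db
        have hx : p.1 * p.2 = qk.1 * m := by
          rw [(hpak : p.1 * p.2 = ck), ← (hqkak : qk.1 * qk.2 = ck), (hqkl : qk.2 = m)]
        rw [hx, rip hM, (hqkbj : qk.1 = db)]
      · show (href m p).1 * (href m p).2 = dk
        rw [href_prod hM, (hpaj : p.1 = ca), ← (hqjbk : qj.1 * qj.2 = dk),
          (hqjl : qj.2 = m), (hqjaj : qj.1 = ca)]
  · rcases fin3 k with rfl | rfl | rfl
    · exact absurd rfl hk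
    · -- j = 2 (transversal), k = 1 (vertical)
      rw [net_lines2] at haj hbj
      rw [net_lines1] at hak hbk
      obtain ⟨ca, rfl⟩ := haj
      obtain ⟨ck, rfl⟩ := hak
      obtain ⟨db, rfl⟩ := hbj
      obtain ⟨dk, rfl⟩ := hbk
      constructor
      · show (href m p).1 * (href m p).2 = db
        rw [href_prod hM, (hpak : p.1 = ck), ← (hqkbj : qk.1 * qk.2 = db),
          (hqkl : qk.2 = m), (hqkak : qk.1 = ck)]
      · show (p.1 * p.2) * minv m = dk
        have hx : p.1 * p.2 = qj.1 * m := by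
          rw [(hpaj : p.1 * p.2 = ca), ← (hqjaj : qj.1 * qj.2 = ca), (hqjl : qj.2 = m)]
        rw [hx, rip hM, (hqjbk : qj.1 = dk)]
    · exact absurd rfl hjk

theorem vperm_mem_MGroup (hM : IsMoufang Q) (m : Q) :
    vperm hM m ∈ (Loop.loopNet Q).MGroup :=
  Subgroup.subset_closure ⟨Loop.vline m, ⟨1, by rw [net_lines1]; exact ⟨m, rfl⟩,
    vperm_bolspec hM m⟩, vperm_isColl hM m⟩

theorem hperm_mem_MGroup (hM : IsMoufang Q) (m : Q) :
    hperm hM m ∈ (Loop.loopNet Q).MGroup :=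
  Subgroup.subset_closure ⟨Loop.hline m, ⟨0, by rw [net_lines0]; exact ⟨m, rfl⟩,
    hperm_bolspec hM m⟩, hperm_isColl hM m⟩

end MAux
namespace MAux
open Loop ThreeNet

variable {Q : Type*} [Loop Q]

/-- The direction preserving product of the Bol reflections with vertical axes `X = 1`,
`X = m`. -/
noncomputable def gperm (hM : IsMoufang Q) (m : Q) : Equiv.Perm (Q × Q) :=
  vperm hM 1 * vperm hM m

/-- The direction preserving product of the Bol reflections with horizontal axes `Y = 1`,
`Y = m`. -/
noncomputable def kperm (hM : IsMoufang Q) (m : Q) : Equiv.Perm (Q × Q) :=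
  hperm hM 1 * hperm hM m

theorem gperm_apply (hM : IsMoufang Q) (m : Q) (p : Q × Q) :
    gperm hM m p = (minv (m * (minv p.1 * m)), m * p.2) := by
  show vref 1 (vref m p) = _
  apply Prod.ext
  · show (1 : Q) * (minv (vref m p).1 * 1) = minv (m * (minv p.1 * m))
    rw [Loop.mul_one, Loop.one_mul]; rfl
  · show minv 1 * ((vref m p).1 * (vref m p).2) = m * p.2
    rw [minv_one, Loop.one_mul, vref_prod hM]

theorem gperm_prod (hM : IsMoufang Q) (m : Q) (p : Q × Q) :
    (gperm hM m p).1 * (gperm hM m p).2 = minv m * (p.1 * p.2) := by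
  rw [gperm_apply hM]
  show minv (m * (minv p.1 * m)) * (m * p.2) = minv m * (p.1 * p.2)
  rw [invconj hM]
  calc ((minv m * p.1) * minv m) * (m * p.2)
      = (minv m * (p.1 * minv m)) * (minv (minv m) * p.2) := by
        rw [minv_minv hM, ← flex hM]
    _ = minv m * (p.1 * p.2) := lmouf hM (minv m) p.1 p.2

theorem gperm_inv_apply (hM : IsMoufang Q) (m : Q) (p : Q × Q) :
    ⇑(gperm hM m)⁻¹ p = (m * (p.1 * m), minv m * p.2) := by
  have h : (gperm hM m)⁻¹ = vperm hM m * vperm hM 1 := by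
    show (vperm hM 1 * vperm hM m)⁻¹ = _
    rw [_root_.mul_inv_rev, vperm_inv hM, vperm_inv hM]
  rw [h]
  show vref m (vref 1 p) = _
  have h1 : vref 1 p = (minv p.1, p.1 * p.2) := by
    apply Prod.ext
    · show (1 : Q) * (minv p.1 * 1) = minv p.1
      rw [Loop.mul_one, Loop.one_mul]
    · show minv 1 * (p.1 * p.2) = p.1 * p.2
      rw [minv_one, Loop.one_mul]
  rw [h1]
  show (m * (minv (minv p.1) * m), minv m * (minv p.1 * (p.1 * p.2))) = _
  rw [minv_minv hM, lip hM]

theorem gperm_inv_prod (hM : IsMoufang Q) (m : Q) (p : Q × Q) :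
    (⇑(gperm hM m)⁻¹ p).1 * (⇑(gperm hM m)⁻¹ p).2 = m * (p.1 * p.2) := by
  rw [gperm_inv_apply hM]
  exact lmouf hM m p.1 p.2

theorem kperm_apply (hM : IsMoufang Q) (m : Q) (p : Q × Q) :
    kperm hM m p = (p.1 * m, minv ((m * minv p.2) * m)) := by
  show href 1 (href m p) = _
  apply Prod.ext
  · show (href m p).1 * (href m p).2 * minv 1 = p.1 * m
    rw [minv_one, Loop.mul_one, href_prod hM]
  · show (1 : Q) * minv (href m p).2 * 1 = minv ((m * minv p.2) * m)
    rw [Loop.mul_one, Loop.one_mul]; rfl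

theorem kperm_prod (hM : IsMoufang Q) (m : Q) (p : Q × Q) :
    (kperm hM m p).1 * (kperm hM m p).2 = (p.1 * p.2) * minv m := by
  rw [kperm_apply hM]
  show (p.1 * m) * minv ((m * minv p.2) * m) = (p.1 * p.2) * minv m
  rw [invconj2 hM]
  calc (p.1 * m) * (minv m * (p.2 * minv m))
      = (p.1 * minv (minv m)) * ((minv m * p.2) * minv m) := by
        rw [minv_minv hM, ← flex hM]
    _ = (p.1 * p.2) * minv m := rc hM p.1 (minv m) p.2

theorem kperm_inv_apply (hM : IsMoufang Q) (m : Q) (p : Q × Q) :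
    ⇑(kperm hM m)⁻¹ p = (p.1 * minv m, (m * p.2) * m) := by
  have h : (kperm hM m)⁻¹ = hperm hM m * hperm hM 1 := by
    show (hperm hM 1 * hperm hM m)⁻¹ = _
    rw [_root_.mul_inv_rev, hperm_inv hM, hperm_inv hM]
  rw [h]
  show href m (href 1 p) = _
  have h1 : href 1 p = (p.1 * p.2, minv p.2) := by
    apply Prod.ext
    · show (p.1 * p.2) * minv 1 = p.1 * p.2
      rw [minv_one, Loop.mul_one]
    · show (1 : Q) * minv p.2 * 1 = minv p.2
      rw [Loop.mul_one, Loop.one_mul]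
  rw [h1]
  show (((p.1 * p.2) * minv p.2) * minv m, (m * minv (minv p.2)) * m) = _
  rw [minv_minv hM, rip hM]

theorem kperm_inv_prod (hM : IsMoufang Q) (m : Q) (p : Q × Q) :
    (⇑(kperm hM m)⁻¹ p).1 * (⇑(kperm hM m)⁻¹ p).2 = (p.1 * p.2) * m := by
  rw [kperm_inv_apply hM]
  exact rc hM p.1 m p.2

end MAux
namespace MAux
open Loop ThreeNet

variable {Q : Type*} [Loop Q]

theorem gperm_mem_dirPres (hM : IsMoufang Q) (m : Q) :
    gperm hM m ∈ (Loop.loopNet Q).dirPres := by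
  show ∀ i, ∀ ℓ ∈ (Loop.loopNet Q).lines i,
    ⇑(gperm hM m) '' ℓ ∈ (Loop.loopNet Q).lines i ∧
      ⇑(gperm hM m)⁻¹ '' ℓ ∈ (Loop.loopNet Q).lines i
  intro i ℓ hℓ
  rcases fin3 i with rfl | rfl | rfl
  · rw [net_lines0] at hℓ; obtain ⟨c, rfl⟩ := hℓ
    constructor
    · rw [net_lines0]
      refine ⟨m * c, imageEq _ (fun p hp => ?_) (fun p hp => ?_)⟩
      · show (gperm hM m p).2 = m * c
        rw [gperm_apply hM, (hp : p.2 = c)]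
      · show (⇑(gperm hM m)⁻¹ p).2 = c
        rw [gperm_inv_apply hM]
        show minv m * p.2 = c
        rw [(hp : p.2 = m * c), lip hM]
    · rw [net_lines0]
      refine ⟨minv m * c, imageEq _ (fun p hp => ?_) (fun p hp => ?_)⟩
      · show (⇑(gperm hM m)⁻¹ p).2 = minv m * c
        rw [gperm_inv_apply hM]
        show minv m * p.2 = minv m * c
        rw [(hp : p.2 = c)]
      · rw [inv_inv]
        show (gperm hM m p).2 = c
        rw [gperm_apply hM]
        show m * p.2 = c
        rw [(hp : p.2 = minv m * c), lip2 hM]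
  · rw [net_lines1] at hℓ; obtain ⟨c, rfl⟩ := hℓ
    constructor
    · rw [net_lines1]
      refine ⟨minv (m * (minv c * m)), imageEq _ (fun p hp => ?_) (fun p hp => ?_)⟩
      · show (gperm hM m p).1 = minv (m * (minv c * m))
        rw [gperm_apply hM]
        show minv (m * (minv p.1 * m)) = minv (m * (minv c * m))
        rw [(hp : p.1 = c)]
      · show (⇑(gperm hM m)⁻¹ p).1 = c
        rw [gperm_inv_apply hM]
        show m * (p.1 * m) = c
        rw [(hp : p.1 = minv (m * (minv c * m))), invconj hM, rip2 hM, lip2 hM]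
    · rw [net_lines1]
      refine ⟨m * (c * m), imageEq _ (fun p hp => ?_) (fun p hp => ?_)⟩
      · show (⇑(gperm hM m)⁻¹ p).1 = m * (c * m)
        rw [gperm_inv_apply hM]
        show m * (p.1 * m) = m * (c * m)
        rw [(hp : p.1 = c)]
      · rw [inv_inv]
        show (gperm hM m p).1 = c
        rw [gperm_apply hM]
        show minv (m * (minv p.1 * m)) = c
        have hp1 : minv p.1 = (minv m * minv c) * minv m := by
          rw [(hp : p.1 = m * (c * m)), minv_rev hM, minv_rev hM]
        rw [hp1, rip2 hM, lip2 hM, minv_minv hM]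
  · rw [net_lines2] at hℓ; obtain ⟨c, rfl⟩ := hℓ
    constructor
    · rw [net_lines2]
      refine ⟨minv m * c, imageEq _ (fun p hp => ?_) (fun p hp => ?_)⟩
      · show (gperm hM m p).1 * (gperm hM m p).2 = minv m * c
        rw [gperm_prod hM, (hp : p.1 * p.2 = c)]
      · show (⇑(gperm hM m)⁻¹ p).1 * (⇑(gperm hM m)⁻¹ p).2 = c
        rw [gperm_inv_prod hM, (hp : p.1 * p.2 = minv m * c), lip2 hM]
    · rw [net_lines2]
      refine ⟨m * c, imageEq _ (fun p hp => ?_) (fun p hp => ?_)⟩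
      · show (⇑(gperm hM m)⁻¹ p).1 * (⇑(gperm hM m)⁻¹ p).2 = m * c
        rw [gperm_inv_prod hM, (hp : p.1 * p.2 = c)]
      · rw [inv_inv]
        show (gperm hM m p).1 * (gperm hM m p).2 = c
        rw [gperm_prod hM, (hp : p.1 * p.2 = m * c), lip hM]

theorem kperm_mem_dirPres (hM : IsMoufang Q) (m : Q) :
    kperm hM m ∈ (Loop.loopNet Q).dirPres := by
  show ∀ i, ∀ ℓ ∈ (Loop.loopNet Q).lines i,
    ⇑(kperm hM m) '' ℓ ∈ (Loop.loopNet Q).lines i ∧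
      ⇑(kperm hM m)⁻¹ '' ℓ ∈ (Loop.loopNet Q).lines i
  intro i ℓ hℓ
  rcases fin3 i with rfl | rfl | rfl
  · rw [net_lines0] at hℓ; obtain ⟨c, rfl⟩ := hℓ
    constructor
    · rw [net_lines0]
      refine ⟨minv ((m * minv c) * m), imageEq _ (fun p hp => ?_) (fun p hp => ?_)⟩
      · show (kperm hM m p).2 = minv ((m * minv c) * m)
        rw [kperm_apply hM]
        show minv ((m * minv p.2) * m) = minv ((m * minv c) * m)
        rw [(hp : p.2 = c)]
      · show (⇑(kperm hM m)⁻¹ p).2 = c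
        rw [kperm_inv_apply hM]
        show (m * p.2) * m = c
        rw [(hp : p.2 = minv ((m * minv c) * m)), invconj2 hM, lip2 hM, rip2 hM]
    · rw [net_lines0]
      refine ⟨(m * c) * m, imageEq _ (fun p hp => ?_) (fun p hp => ?_)⟩
      · show (⇑(kperm hM m)⁻¹ p).2 = (m * c) * m
        rw [kperm_inv_apply hM]
        show (m * p.2) * m = (m * c) * m
        rw [(hp : p.2 = c)]
      · rw [inv_inv]
        show (kperm hM m p).2 = c
        rw [kperm_apply hM]
        show minv ((m * minv p.2) * m) = c
        have hp2 : minv p.2 = minv m * (minv c * minv m) := by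
          rw [(hp : p.2 = (m * c) * m), minv_rev hM, minv_rev hM]
        rw [hp2, lip2 hM, rip2 hM, minv_minv hM]
  · rw [net_lines1] at hℓ; obtain ⟨c, rfl⟩ := hℓ
    constructor
    · rw [net_lines1]
      refine ⟨c * m, imageEq _ (fun p hp => ?_) (fun p hp => ?_)⟩
      · show (kperm hM m p).1 = c * m
        rw [kperm_apply hM]
        show p.1 * m = c * m
        rw [(hp : p.1 = c)]
      · show (⇑(kperm hM m)⁻¹ p).1 = c
        rw [kperm_inv_apply hM]
        show p.1 * minv m = c
        rw [(hp : p.1 = c * m), rip hM]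
    · rw [net_lines1]
      refine ⟨c * minv m, imageEq _ (fun p hp => ?_) (fun p hp => ?_)⟩
      · show (⇑(kperm hM m)⁻¹ p).1 = c * minv m
        rw [kperm_inv_apply hM]
        show p.1 * minv m = c * minv m
        rw [(hp : p.1 = c)]
      · rw [inv_inv]
        show (kperm hM m p).1 = c
        rw [kperm_apply hM]
        show p.1 * m = c
        rw [(hp : p.1 = c * minv m), rip2 hM]
  · rw [net_lines2] at hℓ; obtain ⟨c, rfl⟩ := hℓ
    constructor
    · rw [net_lines2]
      refine ⟨c * minv m, imageEq _ (fun p hp => ?_) (fun p hp => ?_)⟩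
      · show (kperm hM m p).1 * (kperm hM m p).2 = c * minv m
        rw [kperm_prod hM, (hp : p.1 * p.2 = c)]
      · show (⇑(kperm hM m)⁻¹ p).1 * (⇑(kperm hM m)⁻¹ p).2 = c
        rw [kperm_inv_prod hM, (hp : p.1 * p.2 = c * minv m), rip2 hM]
    · rw [net_lines2]
      refine ⟨c * m, imageEq _ (fun p hp => ?_) (fun p hp => ?_)⟩
      · show (⇑(kperm hM m)⁻¹ p).1 * (⇑(kperm hM m)⁻¹ p).2 = c * m
        rw [kperm_inv_prod hM, (hp : p.1 * p.2 = c)]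
      · rw [inv_inv]
        show (kperm hM m p).1 * (kperm hM m p).2 = c
        rw [kperm_prod hM, (hp : p.1 * p.2 = c * m), rip hM]

theorem gperm_mem_MZero (hM : IsMoufang Q) (m : Q) :
    gperm hM m ∈ (Loop.loopNet Q).MZero :=
  Subgroup.mem_inf.mpr ⟨mul_mem (vperm_mem_MGroup hM 1) (vperm_mem_MGroup hM m),
    gperm_mem_dirPres hM m⟩

theorem kperm_mem_MZero (hM : IsMoufang Q) (m : Q) :
    kperm hM m ∈ (Loop.loopNet Q).MZero :=
  Subgroup.mem_inf.mpr ⟨mul_mem (hperm_mem_MGroup hM 1) (hperm_mem_MGroup hM m),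
    kperm_mem_dirPres hM m⟩

end MAux
namespace MAux
open Loop ThreeNet

variable {Q : Type*} [Loop Q]

theorem sigma1_apply (hM : IsMoufang Q) {f : Equiv.Perm (Q × Q)}
    (hs : (Loop.loopNet Q).BolSpec 1 (Loop.originLine Q 1) f) (p : Q × Q) :
    f p = (minv p.1, p.1 * p.2) := by
  obtain ⟨x, y⟩ := p
  have h := hs 0 2 (by decide) (by decide) (by decide) (x, y)
    (Loop.hline y) (by rw [net_lines0]; exact ⟨y, rfl⟩)
    (Loop.tline (x * y)) (by rw [net_lines2]; exact ⟨x * y, rfl⟩)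
    rfl rfl
    ((1 : Q), y) rfl rfl
    ((1 : Q), x * y) (Loop.one_mul (x * y)) rfl
    (Loop.hline (x * y)) (by rw [net_lines0]; exact ⟨x * y, rfl⟩)
    (Loop.tline y) (by rw [net_lines2]; exact ⟨y, rfl⟩)
    rfl (Loop.one_mul y)
  obtain ⟨h1, h2⟩ := h
  have h1' : (f (x, y)).2 = x * y := h1
  have h2' : (f (x, y)).1 * (f (x, y)).2 = y := h2
  apply Prod.ext
  · show (f (x, y)).1 = minv x
    have h3 : (f (x, y)).1 * (x * y) = y := by rw [← h1']; exact h2'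
    exact Loop.mul_right_cancel' (h3.trans (lip hM x y).symm)
  · exact h1'

theorem sigma0_apply (hM : IsMoufang Q) {f : Equiv.Perm (Q × Q)}
    (hs : (Loop.loopNet Q).BolSpec 0 (Loop.originLine Q 0) f) (p : Q × Q) :
    f p = (p.1 * p.2, minv p.2) := by
  obtain ⟨x, y⟩ := p
  have h := hs 1 2 (by decide) (by decide) (by decide) (x, y)
    (Loop.vline x) (by rw [net_lines1]; exact ⟨x, rfl⟩)
    (Loop.tline (x * y)) (by rw [net_lines2]; exact ⟨x * y, rfl⟩)
    rfl rfl
    (x, (1 : Q)) rfl rfl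
    (x * y, (1 : Q)) (Loop.mul_one (x * y)) rfl
    (Loop.vline (x * y)) (by rw [net_lines1]; exact ⟨x * y, rfl⟩)
    (Loop.tline x) (by rw [net_lines2]; exact ⟨x, rfl⟩)
    rfl (Loop.mul_one x)
  obtain ⟨h1, h2⟩ := h
  have h1' : (f (x, y)).1 = x * y := h1
  have h2' : (f (x, y)).1 * (f (x, y)).2 = x := h2
  apply Prod.ext
  · exact h1'
  · show (f (x, y)).2 = minv y
    have h3 : (x * y) * (f (x, y)).2 = x := by rw [← h1']; exact h2'
    have h4 : (x * y) * minv y = x := rip hM x y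
    exact Loop.mul_left_cancel' (h3.trans h4.symm)

end MAux

/-- Let `Q` be a Moufang loop with associated `3`-net `N`, let `G = M₀` be the group of
direction preserving collineations of `N` generated by the Bol reflections, with
triality group `S = ⟨σ, ρ⟩` generated by the Bol reflections `σ 0, σ 1, σ 2` through
the origin, where `ρ = σ 0 · σ 1` permutes the three directions cyclically. If `ρ` is
an inner automorphism of `G` (i.e. conjugation by `ρ` coincides on `G` with conjugation
by some element of `G`), then `Q` has exponent `3`. -/
theorem rho_inner_implies_exponent_three (Q : Type*) [Loop Q] (hMouf : IsMoufang Q)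
    (σ : Fin 3 → Equiv.Perm (Q × Q))
    (hσ : ∀ i, (Loop.loopNet Q).BolSpec i (Loop.originLine Q i) (σ i) ∧
      (Loop.loopNet Q).IsColl (σ i))
    (hinner : ∃ α ∈ (Loop.loopNet Q).MZero, ∀ g ∈ (Loop.loopNet Q).MZero,
      (σ 0 * σ 1)⁻¹ * g * (σ 0 * σ 1) = α⁻¹ * g * α) :
    ∀ a : Q, (a * a) * a = 1 := by
  classical
  obtain ⟨α, hαM, hconj⟩ := hinner
  have hα : ∀ i, ∀ ℓ ∈ (Loop.loopNet Q).lines i,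
      ⇑α '' ℓ ∈ (Loop.loopNet Q).lines i ∧ ⇑α⁻¹ '' ℓ ∈ (Loop.loopNet Q).lines i :=
    (Subgroup.mem_inf.mp hαM).2
  set w : Equiv.Perm (Q × Q) := (σ 0 * σ 1) * α⁻¹ with hw
  have hcomm : ∀ g ∈ (Loop.loopNet Q).MZero, ∀ p : Q × Q, w (g p) = g (w p) := by
    intro g hg p
    have hc := hconj g hg
    have key : w * g = g * w := by
      rw [hw]
      calc (σ 0 * σ 1) * α⁻¹ * g
          = (σ 0 * σ 1) * (α⁻¹ * g * α) * α⁻¹ := by group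
        _ = (σ 0 * σ 1) * ((σ 0 * σ 1)⁻¹ * g * (σ 0 * σ 1)) * α⁻¹ := by rw [← hc]
        _ = g * ((σ 0 * σ 1) * α⁻¹) := by group
    have h2 := DFunLike.congr_fun key p
    simpa [Equiv.Perm.mul_apply] using h2
  have hwap : ∀ p : Q × Q,
      w p = ((⇑α⁻¹ p).2, MAux.minv ((⇑α⁻¹ p).1 * (⇑α⁻¹ p).2)) := by
    intro p
    have e1 : w p = σ 0 (σ 1 (⇑α⁻¹ p)) := rfl
    rw [e1, MAux.sigma1_apply hMouf (hσ 1).1, MAux.sigma0_apply hMouf (hσ 0).1]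
    dsimp only
    rw [MAux.lip hMouf]
  have S1 : ∀ p q : Q × Q, p.2 = q.2 → (w p).1 = (w q).1 := by
    intro p q hpq
    have hmem := (hα 0 (Loop.hline p.2) (by rw [MAux.net_lines0]; exact ⟨p.2, rfl⟩)).2
    rw [MAux.net_lines0] at hmem
    obtain ⟨c', hc'⟩ := hmem
    have h1 : (⇑α⁻¹ p).2 = c' := by
      have hx : ⇑α⁻¹ p ∈ Loop.hline c' := by rw [← hc']; exact ⟨p, rfl, rfl⟩
      exact hx
    have h2 : (⇑α⁻¹ q).2 = c' := by
      have hx : ⇑α⁻¹ q ∈ Loop.hline c' := by rw [← hc']; exact ⟨q, hpq.symm, rfl⟩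
      exact hx
    rw [hwap p, hwap q]
    show (⇑α⁻¹ p).2 = (⇑α⁻¹ q).2
    rw [h1, h2]
  have S2 : ∀ p q : Q × Q, p.1 * p.2 = q.1 * q.2 → (w p).2 = (w q).2 := by
    intro p q hpq
    have hmem := (hα 2 (Loop.tline (p.1 * p.2))
      (by rw [MAux.net_lines2]; exact ⟨p.1 * p.2, rfl⟩)).2
    rw [MAux.net_lines2] at hmem
    obtain ⟨c', hc'⟩ := hmem
    have h1 : (⇑α⁻¹ p).1 * (⇑α⁻¹ p).2 = c' := by
      have hx : ⇑α⁻¹ p ∈ Loop.tline c' := by rw [← hc']; exact ⟨p, rfl, rfl⟩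
      exact hx
    have h2 : (⇑α⁻¹ q).1 * (⇑α⁻¹ q).2 = c' := by
      have hx : ⇑α⁻¹ q ∈ Loop.tline c' := by rw [← hc']; exact ⟨q, hpq.symm, rfl⟩
      exact hx
    rw [hwap p, hwap q]
    show MAux.minv ((⇑α⁻¹ p).1 * (⇑α⁻¹ p).2) = MAux.minv ((⇑α⁻¹ q).1 * (⇑α⁻¹ q).2)
    rw [h1, h2]
  have S3 : ∀ p q : Q × Q, p.1 = q.1 → (w p).1 * (w p).2 = (w q).1 * (w q).2 := by
    intro p q hpq
    have hmem := (hα 1 (Loop.vline p.1) (by rw [MAux.net_lines1]; exact ⟨p.1, rfl⟩)).2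
    rw [MAux.net_lines1] at hmem
    obtain ⟨c', hc'⟩ := hmem
    have h1 : (⇑α⁻¹ p).1 = c' := by
      have hx : ⇑α⁻¹ p ∈ Loop.vline c' := by rw [← hc']; exact ⟨p, rfl, rfl⟩
      exact hx
    have h2 : (⇑α⁻¹ q).1 = c' := by
      have hx : ⇑α⁻¹ q ∈ Loop.vline c' := by rw [← hc']; exact ⟨q, hpq.symm, rfl⟩
      exact hx
    rw [hwap p, hwap q]
    show (⇑α⁻¹ p).2 * MAux.minv ((⇑α⁻¹ p).1 * (⇑α⁻¹ p).2)
      = (⇑α⁻¹ q).2 * MAux.minv ((⇑α⁻¹ q).1 * (⇑α⁻¹ q).2)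
    rw [h1, h2, MAux.mul_minv_mul hMouf, MAux.mul_minv_mul hMouf]
  obtain ⟨φ, hφ⟩ : ∃ φ : Q → Q, ∀ t : Q, φ t = (w ((1 : Q), t)).1 := ⟨_, fun _ => rfl⟩
  obtain ⟨χ, hχ0⟩ : ∃ χ : Q → Q, ∀ t : Q, χ t = (w ((1 : Q), t)).2 := ⟨_, fun _ => rfl⟩
  have hpt : ∀ p : Q × Q, w p = (φ p.2, χ (p.1 * p.2)) := by
    intro p
    apply Prod.ext
    · show (w p).1 = φ p.2
      rw [hφ]
      exact S1 p ((1 : Q), p.2) rfl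
    · show (w p).2 = χ (p.1 * p.2)
      rw [hχ0]
      exact S2 p ((1 : Q), p.1 * p.2) (by rw [Loop.one_mul])
  have hG : ∀ m t : Q, φ (m * t) = MAux.minv (m * (MAux.minv (φ t) * m))
      ∧ χ (MAux.minv m * t) = m * χ t := by
    intro m t
    have h := hcomm (MAux.gperm hMouf m) (MAux.gperm_mem_MZero hMouf m) ((1 : Q), t)
    rw [hpt (⇑(MAux.gperm hMouf m) ((1 : Q), t)), hpt ((1 : Q), t)] at h
    rw [MAux.gperm_prod hMouf] at h
    rw [MAux.gperm_apply hMouf, MAux.gperm_apply hMouf] at h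
    simp only [Prod.mk.injEq, Loop.one_mul] at h
    exact h
  have hK0 : ∀ m t : Q, χ (MAux.minv m * t) = m * χ t := fun m t => (hG m t).2
  have hA : ∀ m : Q, φ m = MAux.minv (m * (MAux.minv (φ 1) * m)) := fun m => by
    have h := (hG m 1).1
    rwa [Loop.mul_one] at h
  have hCraw : ∀ m t : Q, φ (MAux.minv ((m * MAux.minv t) * m)) = φ t * m := by
    intro m t
    have h := hcomm (MAux.kperm hMouf m) (MAux.kperm_mem_MZero hMouf m) ((1 : Q), t)
    rw [hpt (⇑(MAux.kperm hMouf m) ((1 : Q), t)), hpt ((1 : Q), t)] at h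
    rw [MAux.kperm_prod hMouf] at h
    rw [MAux.kperm_apply hMouf, MAux.kperm_apply hMouf] at h
    simp only [Prod.mk.injEq, Loop.one_mul] at h
    exact h.1
  have hχt : ∀ t : Q, χ t = MAux.minv t * χ 1 := by
    intro t
    have h := hK0 (MAux.minv t) 1
    rwa [MAux.minv_minv hMouf, Loop.mul_one] at h
  have hE1 : ∀ t : Q, φ t * χ t = φ 1 * χ 1 := by
    intro t
    have h := S3 ((1 : Q), t) ((1 : Q), (1 : Q)) rfl
    rw [hφ t, hχ0 t, hφ 1, hχ0 1]
    exact h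
  have hH : ∀ m : Q, (m * (MAux.minv (φ 1) * m)) * m = MAux.minv (φ 1) := by
    intro m
    have e1 := hE1 m
    rw [hA m, hχt m] at e1
    have e2 : χ ((m * (MAux.minv (φ 1) * m)) * m)
        = MAux.minv (m * (MAux.minv (φ 1) * m)) * χ m := by
      have h := hK0 (MAux.minv (m * (MAux.minv (φ 1) * m))) m
      rwa [MAux.minv_minv hMouf] at h
    rw [hχt ((m * (MAux.minv (φ 1) * m)) * m), hχt m] at e2
    rw [← e2] at e1
    have e3 : MAux.minv ((m * (MAux.minv (φ 1) * m)) * m) = φ 1 := Loop.mul_right_cancel' e1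
    have e4 := congrArg MAux.minv e3
    rwa [MAux.minv_minv hMouf] at e4
  have hφeq : ∀ m : Q, φ m = m * φ 1 := by
    intro m
    have h1 : m * (MAux.minv (φ 1) * m) = MAux.minv (φ 1) * MAux.minv m := by
      have h := MAux.rip hMouf (m * (MAux.minv (φ 1) * m)) m
      rw [hH m] at h
      exact h.symm
    rw [hA m, h1, ← MAux.minv_rev hMouf, MAux.minv_minv hMouf]
  have hC'' : ∀ m t : Q,
      MAux.minv ((m * MAux.minv t) * m) * φ 1 = (t * φ 1) * m := by
    intro m t
    have h := hCraw m t
    rwa [hφeq (MAux.minv ((m * MAux.minv t) * m)), hφeq t] at h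
  have hC3 : ∀ m : Q, ((m * φ 1) * m) * m = φ 1 := by
    intro m
    have h := hC'' m (MAux.minv (φ 1))
    rw [MAux.minv_minv hMouf, MAux.minv_mul hMouf, Loop.one_mul] at h
    have h2 := MAux.lip2 hMouf ((m * φ 1) * m) (φ 1)
    rwa [h] at h2
  have hC4 : ∀ m : Q, (m * φ 1) * m = MAux.minv m * φ 1 := by
    intro m
    have h := hC'' m m
    rw [MAux.mul_minv, Loop.one_mul] at h
    exact h.symm
  intro a
  have h5 := hC'' a (MAux.minv a)
  rw [MAux.minv_minv hMouf] at h5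
  rw [← hC4 a, hC3 a] at h5
  have h6 : MAux.minv ((a * a) * a) = 1 := by
    have h7 : MAux.minv ((a * a) * a) * φ 1 = 1 * φ 1 := by rw [h5, Loop.one_mul]
    exact Loop.mul_right_cancel' h7
  have h8 := congrArg MAux.minv h6
  rwa [MAux.minv_minv hMouf, MAux.minv_one] at h8
end
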